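/- arXiv:2009.10186 — 7 statements merged into one kernel-verified Lean document; each statement's English description precedes it below -/
import Mathlib

section
/- For t = 1: the number of extremal XYX-avoiding words over a k-letter alphabet is k!. Concretely, a word over a k-letter alphabet is extremal XYX-avoiding if and only if it has the form a_{i₁}a_{i₁}a_{i₂}a_{i₂}⋯a_{i_k}a_{i_k} for some permutation (i₁,…,i_k) of [k]. -/
/-!
Two equal letters at distance at least two realize `XYX` with `X` a single letter, so a word
contains `XYX` iff it has a subsequence `aba`; in an `XYX`-avoiding word equal letters
are therefore adjacent. In an extremal word every letter occurs (otherwise prepend it) and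
occurs twice (otherwise insert a second copy next to it), so the word is `a₁a₁⋯aₖaₖ` with
distinct letters. Conversely, inserting any letter into such a word creates a third copy of it.
-/

/-- `E` is an extension of `W`: `W` with one letter inserted at some position. -/
def Extends {A : Type*} (W E : List A) : Prop :=
  ∃ (W₁ W₂ : List A) (x : A), W = W₁ ++ W₂ ∧ E = W₁ ++ x :: W₂

/-- `WW'` is an almost-square: `W'` is an extension of `W`, or `W'` is obtained
from `W` by deleting one letter (equivalently, `W` is an extension of `W'`). -/
def AlmostSq {A : Type*} (W W' : List A) : Prop :=
  Extends W W' ∨ Extends W' W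

/-- `U` contains a square (a nonempty factor of the form `X ++ X`). -/
def HasSquare {A : Type*} (U : List A) : Prop :=
  ∃ X : List A, X ≠ [] ∧ X ++ X <:+: U

def SquareFree {A : Type*} (U : List A) : Prop := ¬ HasSquare U

/-- `F` realizes the pattern `X Y₁ X Y₂ X ⋯ X Y_t X` (with `2*t+1` nonempty blocks,
all odd-indexed blocks equal to `X`). -/
def RealizesPat {A : Type*} (t : ℕ) (F : List A) : Prop :=
  ∃ (X : List A) (Y : Fin t → List A), X ≠ [] ∧ (∀ i, Y i ≠ []) ∧
    F = X ++ (List.ofFn (fun i => Y i ++ X)).flatten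

/-- `W` contains the pattern `X Y₁ X ⋯ X Y_t X`. -/
def ContainsPat {A : Type*} (t : ℕ) (W : List A) : Prop :=
  ∃ F : List A, F <:+: W ∧ RealizesPat t F

/-- `W` is extremal `X Y₁ X ⋯ X Y_t X`-avoiding over the alphabet `A`. -/
def ExtremalPat {A : Type*} (t : ℕ) (W : List A) : Prop :=
  ¬ ContainsPat t W ∧ ∀ E : List A, Extends W E → ContainsPat t E

/-- `W` is extremal square-free over the alphabet `A`. -/
def ExtremalSF {A : Type*} (W : List A) : Prop :=
  SquareFree W ∧ ∀ E : List A, Extends W E → HasSquare E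

open List

variable {A : Type*}

theorem List.exists_eq_append_cons_of_cons_sublist {a : A} {l W : List A} (h : a :: l <+ W) :
    ∃ P S, W = P ++ a :: S ∧ l <+ S := by
  obtain ⟨r₁, r₂, rfl, ha, hl⟩ := cons_sublist_iff.mp h
  obtain ⟨P, Q, rfl⟩ := append_of_mem ha
  exact ⟨P, Q ++ r₂, by simp, hl.trans (sublist_append_right Q r₂)⟩

theorem containsPat_one_iff_exists_sublist {W : List A} :
    ContainsPat 1 W ↔ ∃ a b, [a, b, a] <+ W := by
  constructor
  · rintro ⟨F, hFW, X, Y, hX, hY, rfl⟩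
    obtain ⟨a, X', rfl⟩ := exists_cons_of_ne_nil hX
    obtain ⟨b, Y', hY0⟩ := exists_cons_of_ne_nil (hY 0)
    refine ⟨a, b, Sublist.trans ?_ hFW.sublist⟩
    have hba : [b, a] <+ Y 0 ++ a :: X' := by
      rw [hY0]
      exact (singleton_sublist.mpr (by simp)).cons_cons b
    simpa [ofFn_succ] using (hba.trans (sublist_append_right X' _)).cons_cons a
  · rintro ⟨a, b, hsub⟩
    obtain ⟨P, S, rfl, hS⟩ := exists_eq_append_cons_of_cons_sublist hsub
    obtain ⟨Q, S', rfl, hS'⟩ := exists_eq_append_cons_of_cons_sublist hS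
    obtain ⟨R, T, rfl⟩ := append_of_mem (singleton_sublist.mp hS')
    refine ⟨a :: (Q ++ b :: R) ++ [a], ⟨P, T, by simp⟩, [a], fun _ => Q ++ b :: R,
      by simp, by simp, by simp [ofFn_succ]⟩

theorem List.exists_pair_sublist_iff_mem_tail {a : A} {W : List A} :
    (∃ b, [b, a] <+ W) ↔ a ∈ W.tail := by
  cases W with
  | nil => simp
  | cons w W =>
    constructor
    · rintro ⟨b, hb⟩
      rcases sublist_cons_iff.mp hb with h | ⟨r, hr, hrW⟩
      · exact h.subset (by simp)
      · obtain ⟨-, rfl⟩ := cons.inj hr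
        exact singleton_sublist.mp hrW
    · intro ha
      exact ⟨w, (singleton_sublist.mpr ha).cons_cons w⟩

theorem containsPat_one_cons_iff {a : A} {W : List A} :
    ContainsPat 1 (a :: W) ↔ ContainsPat 1 W ∨ a ∈ W.tail := by
  simp only [containsPat_one_iff_exists_sublist, sublist_cons_iff,
    ← exists_pair_sublist_iff_mem_tail]
  constructor
  · rintro ⟨c, b, h | ⟨r, hr, hrW⟩⟩
    · exact .inl ⟨c, b, h⟩
    · simp only [cons.injEq] at hr
      obtain ⟨rfl, rfl⟩ := hr
      exact .inr ⟨b, hrW⟩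
  · rintro (⟨c, b, h⟩ | ⟨b, h⟩)
    · exact ⟨c, b, .inl h⟩
    · exact ⟨a, b, .inr ⟨[b, a], rfl, h⟩⟩

def List.double (L : List A) : List A := L.flatMap fun a => [a, a]

@[simp] theorem List.double_nil : double ([] : List A) = [] := rfl

@[simp] theorem List.double_cons (a : A) (L : List A) : double (a :: L) = a :: a :: double L :=
  rfl

@[simp] theorem List.mem_double {x : A} {L : List A} : x ∈ double L ↔ x ∈ L := by
  simp [double]

theorem List.double_injective : Function.Injective (double : List A → List A)
  | [], [], _ => rfl
  | _ :: _, _ :: _, h => by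
    simp only [double_cons, cons.injEq] at h
    rw [h.1, double_injective h.2.2]

theorem List.double_ofFn {k : ℕ} (f : Fin k → A) :
    double (ofFn f) = (ofFn fun i => [f i, f i]).flatten := by
  rw [double, flatMap_def, map_ofFn]
  rfl

theorem not_containsPat_one_double {L : List A} (hL : L.Nodup) : ¬ ContainsPat 1 (double L) := by
  induction L with
  | nil => simp [containsPat_one_iff_exists_sublist]
  | cons a L ih =>
    rw [nodup_cons] at hL
    have ha : a ∉ double L := mem_double.not.mpr hL.1
    simp only [double_cons, containsPat_one_cons_iff, tail_cons, ih hL.2, ha, false_or, or_false]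
    exact fun h => ha (mem_of_mem_tail h)

theorem containsPat_one_of_duplicate_insert {x : A} {W₁ W₂ : List A}
    (hx : Duplicate x (W₁ ++ W₂)) :
    ContainsPat 1 (W₁ ++ x :: W₂) := by
  obtain ⟨l₁, l₂, hl, h₁, h₂⟩ := sublist_append_iff.mp (duplicate_iff_sublist.mp hx)
  have hxxx : l₁ ++ x :: l₂ = replicate 3 x := by
    have hmem : ∀ y ∈ l₁ ++ l₂, y = x := fun y hy => by simpa [← hl] using hy
    have hlen : (l₁ ++ l₂).length = 2 := by simp [← hl]
    refine eq_replicate_iff.mpr ⟨by simp at hlen ⊢; omega, fun y hy => ?_⟩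
    rcases mem_append.mp hy with hy | hy
    · exact hmem y (mem_append_left _ hy)
    · exact (mem_cons.mp hy).elim id fun hy => hmem y (mem_append_right _ hy)
  have hsub : replicate 3 x <+ W₁ ++ x :: W₂ := hxxx ▸ h₁.append (h₂.cons_cons x)
  exact containsPat_one_iff_exists_sublist.mpr ⟨x, x, hsub⟩

theorem not_containsPat_one_insert_twin {P S : List A} {a : A}
    (h : ¬ ContainsPat 1 (P ++ a :: S)) (hP : a ∉ P) (hS : a ∉ S) :
    ¬ ContainsPat 1 (P ++ a :: a :: S) := by
  induction P with
  | nil => simp_all [containsPat_one_cons_iff]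
  | cons p P ih =>
    simp only [cons_append, containsPat_one_cons_iff, not_or, mem_cons] at h hP ⊢
    refine ⟨ih h.1 hP.2, ?_⟩
    cases P <;> simp_all [eq_comm]

theorem extremalPat_one_double {L : List A} (hL : L.Nodup) (hcompl : ∀ x, x ∈ L) :
    ExtremalPat 1 (double L) := by
  refine ⟨not_containsPat_one_double hL, ?_⟩
  rintro E ⟨W₁, W₂, x, hW, rfl⟩
  apply containsPat_one_of_duplicate_insert
  rw [← hW]
  obtain ⟨P, S, rfl⟩ := append_of_mem (hcompl x)
  simp [double, duplicate_iff_sublist]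

theorem ExtremalPat.mem {W : List A} (h : ExtremalPat 1 W) (x : A) : x ∈ W := by
  by_contra hx
  have := h.2 (x :: W) ⟨[], W, x, rfl, rfl⟩
  rw [containsPat_one_cons_iff] at this
  exact this.elim h.1 fun hx' => hx (mem_of_mem_tail hx')

theorem ExtremalPat.duplicate {W : List A} (h : ExtremalPat 1 W) {x : A} (hx : x ∈ W) :
    Duplicate x W := by
  by_contra hdup
  obtain ⟨P, S, rfl⟩ := append_of_mem hx
  have hP : x ∉ P := fun hP => hdup (duplicate_iff_sublist.mpr <|
    (singleton_sublist.mpr hP).append (singleton_sublist.mpr (mem_cons_self ..)))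
  have hS : x ∉ S := fun hS => hdup (duplicate_iff_sublist.mpr <|
    ((singleton_sublist.mpr hS).cons_cons x).trans (sublist_append_right P _))
  exact not_containsPat_one_insert_twin h.1 hP hS (h.2 _ ⟨P, x :: S, x, rfl, rfl⟩)

theorem exists_nodup_eq_double :
    ∀ {W : List A}, ¬ ContainsPat 1 W → (∀ x ∈ W, Duplicate x W) →
      ∃ L : List A, L.Nodup ∧ W = double L
  | [], _, _ => ⟨[], nodup_nil, rfl⟩
  | [a], _, hdup => absurd (hdup a (mem_singleton_self a)) (by simp)
  | a :: b :: W, hW, hdup => by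
    rw [containsPat_one_cons_iff, containsPat_one_cons_iff, tail_cons] at hW
    simp only [not_or] at hW
    obtain ⟨⟨hW, -⟩, haW⟩ := hW
    obtain rfl : a = b := by
      have hab : a ∈ b :: W := by
        rcases duplicate_cons_iff.mp (hdup a (mem_cons_self ..)) with h | h
        exacts [h.2, h.mem]
      simpa [haW] using hab
    have hdupW : ∀ x ∈ W, Duplicate x W := fun x hx => by
      have hxa : x ≠ a := fun h => haW (h ▸ hx)
      simpa [duplicate_cons_iff_of_ne hxa] using hdup x (by simp [hx])
    obtain ⟨L, hL, rfl⟩ := exists_nodup_eq_double hW hdupW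
    exact ⟨a :: L, nodup_cons.mpr ⟨mem_double.not.mp haW, hL⟩, rfl⟩

theorem extremalPat_one_iff {W : List A} :
    ExtremalPat 1 W ↔ ∃ L : List A, (L.Nodup ∧ ∀ x, x ∈ L) ∧ W = double L := by
  constructor
  · intro h
    obtain ⟨L, hL, rfl⟩ := exists_nodup_eq_double h.1 fun x hx => h.duplicate hx
    exact ⟨L, ⟨hL, fun x => mem_double.mp (h.mem x)⟩, rfl⟩
  · rintro ⟨L, ⟨hL, hcompl⟩, rfl⟩
    exact extremalPat_one_double hL hcompl

theorem List.nodup_and_forall_mem_iff_exists_perm {k : ℕ} {L : List (Fin k)} :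
    (L.Nodup ∧ ∀ x, x ∈ L) ↔ ∃ σ : Equiv.Perm (Fin k), ofFn σ = L := by
  constructor
  · rintro ⟨hL, hcompl⟩
    let e := hL.getEquivOfForallMemList L hcompl
    have hk : L.length = k := Fin.equiv_iff_eq.mp ⟨e⟩
    refine ⟨(finCongr hk.symm).trans e, ext_getElem (by simp [hk]) fun i _ _ => ?_⟩
    simp [e]
  · rintro ⟨σ, rfl⟩
    exact ⟨nodup_ofFn.mpr σ.injective,
      fun x => mem_ofFn.mpr ⟨σ.symm x, σ.apply_symm_apply x⟩⟩

theorem stmt2 (k : ℕ) :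
    (∀ W : List (Fin k), ExtremalPat 1 W ↔
      ∃ σ : Equiv.Perm (Fin k), W = (List.ofFn (fun i => [σ i, σ i])).flatten) ∧
    {W : List (Fin k) | ExtremalPat 1 W}.Finite ∧
    {W : List (Fin k) | ExtremalPat 1 W}.ncard = Nat.factorial k := by
  have hchar (W : List (Fin k)) :
      ExtremalPat 1 W ↔ ∃ σ : Equiv.Perm (Fin k), W = double (ofFn σ) := by
    simp only [extremalPat_one_iff, nodup_and_forall_mem_iff_exists_perm, exists_exists_eq_and]
  have hset : {W : List (Fin k) | ExtremalPat 1 W} = Set.range fun σ : Equiv.Perm (Fin k) =>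
      double (ofFn σ) := by
    ext W
    simp [hchar, eq_comm]
  have hinj : Function.Injective fun σ : Equiv.Perm (Fin k) => double (ofFn σ) :=
    double_injective.comp (ofFn_injective.comp DFunLike.coe_injective)
  refine ⟨fun W => by simp only [hchar, double_ofFn], ?_, ?_⟩
  · rw [hset]
    exact Set.finite_range _
  · rw [hset, Set.ncard_range_of_injective hinj, Nat.card_perm, Nat.card_eq_fintype_card,
      Fintype.card_fin]
end

section
/- The number of extremal XY₁XY₂X-avoiding words over a k-letter alphabet is (2k)!/2^k. -/
namespace List

variable {α : Type*}

lemma exists_eq_append_cons_of_getElem?_eq_some {l : List α} {i : ℕ} {a : α}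
    (h : l[i]? = some a) : ∃ l₁ l₂, l = l₁ ++ a :: l₂ ∧ l₁.length = i := by
  obtain ⟨hi, rfl⟩ := getElem?_eq_some_iff.mp h
  exact ⟨l.take i, l.drop (i + 1), by simp, by simp; omega⟩

lemma insertIdx_length_append (l₁ l₂ : List α) (x : α) :
    (l₁ ++ l₂).insertIdx l₁.length x = l₁ ++ x :: l₂ := by
  induction l₁ <;> simp_all [insertIdx_succ_cons]

lemma getElem?_insertIdx_eq_some_iff {l : List α} {p q : ℕ} {x a : α} (hp : p ≤ l.length) :
    (l.insertIdx p x)[q]? = some a ↔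
      (q < p ∧ l[q]? = some a) ∨ (q = p ∧ x = a) ∨ (p < q ∧ l[q - 1]? = some a) := by
  rw [getElem?_insertIdx]
  split_ifs with hlt heq hle
  · simp [hlt, hlt.ne, hlt.not_gt]
  · simp [heq]
  · omega
  · simp [hlt, heq, show p < q by omega]

variable [DecidableEq α]

lemma count_eq_card_of_getElem?_eq_some_iff {l : List α} {x : α} {S : Finset ℕ}
    (h : ∀ q, l[q]? = some x ↔ q ∈ S) : l.count x = S.card := by
  refine (Fin.card_filter_univ_eq_vector_get_eq_count x ⟨l, rfl⟩).symm.trans ?_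
  refine Finset.card_bij (fun i _ => i.val) (fun i hi => ?_) (fun _ _ _ _ => Fin.ext)
    fun q hq => ?_
  · rw [← h]
    simpa [Vector.get] using (Finset.mem_filter.mp hi).2
  · obtain ⟨hq, hlq⟩ := getElem?_eq_some_iff.mp ((h q).mpr hq)
    exact ⟨⟨q, hq⟩, Finset.mem_filter.mpr ⟨Finset.mem_univ _, by simpa [Vector.get] using hlq⟩, rfl⟩

lemma exists_getElem?_eq_some_iff_of_count_eq_two {l : List α} {x : α} (h : l.count x = 2) :
    ∃ q₁ q₂ : ℕ, q₁ < q₂ ∧ ∀ q, l[q]? = some x ↔ q = q₁ ∨ q = q₂ := by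
  set S := (Finset.range l.length).filter fun q => l[q]? = some x
  have hS : ∀ q, l[q]? = some x ↔ q ∈ S := fun q => by
    simpa [S] using fun hq => (getElem?_eq_some_iff.mp hq).1
  obtain ⟨q₁, q₂, hne, hq⟩ :=
    Finset.card_eq_two.mp ((count_eq_card_of_getElem?_eq_some_iff hS).symm.trans h)
  rcases Nat.lt_or_gt_of_ne hne with hlt | hlt
  · exact ⟨q₁, q₂, hlt, fun q => by simp [hS, hq]⟩
  · exact ⟨q₂, q₁, hlt, fun q => by simp [hS, hq, or_comm]⟩

lemma count_ofFn {n : ℕ} (g : Fin n → α) (x : α) :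
    (ofFn g).count x = Fintype.card {a // g a = x} := by
  rw [Fintype.card_subtype, ← Vector.toList_ofFn, ← Fin.card_filter_univ_eq_vector_get_eq_count]
  simp

lemma length_eq_mul_card_of_count_eq [Fintype α] {l : List α} {m : ℕ}
    (hl : ∀ x, l.count x = m) : l.length = m * Fintype.card α := by
  have := Multiset.sum_count_eq_card (s := Finset.univ) (m := (l : Multiset α))
    fun _ _ => Finset.mem_univ _
  simp only [Multiset.coe_count, hl, Multiset.coe_card, Finset.sum_const, Finset.card_univ,
    smul_eq_mul] at this
  rw [← this, mul_comm]

end List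

section Orbit

open Equiv MulAction
open scoped Nat

variable {α ι : Type*}

lemma exists_perm_comp_eq_iff_card_fiber_eq [Fintype α] [DecidableEq ι] {f g : α → ι} :
    (∃ σ : Perm α, f ∘ σ = g) ↔
      ∀ i, Fintype.card {a // g a = i} = Fintype.card {a // f a = i} := by
  constructor
  · rintro ⟨σ, rfl⟩ i
    exact Fintype.card_congr (σ.subtypeEquiv fun _ => Iff.rfl)
  · intro h
    exact ⟨ofFiberEquiv fun i => Fintype.equivOfCardEq (h i), funext (ofFiberEquiv_map _)⟩

lemma card_comp_perm_mul_prod_factorial [Fintype α] [DecidableEq α] [Fintype ι] [DecidableEq ι]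
    (f : α → ι) :
    Nat.card {g : α → ι // ∃ σ : Perm α, f ∘ σ = g} * ∏ i, (Fintype.card {a // f a = i})! =
      (Fintype.card α)! := by
  have horbit : orbit (Perm α)ᵈᵐᵃ f = {g | ∃ σ : Perm α, f ∘ σ = g} := by
    ext g
    exact ⟨fun ⟨c, hc⟩ => ⟨DomMulAct.mk.symm c, hc⟩, fun ⟨σ, hσ⟩ => ⟨DomMulAct.mk σ, hσ⟩⟩
  have hstab : Nat.card (stabilizer (Perm α)ᵈᵐᵃ f) = ∏ i, (Fintype.card {a // f a = i})! := by
    rw [← DomMulAct.stabilizer_card, ← Nat.card_eq_fintype_card]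
    exact Nat.card_congr (subtypeEquiv DomMulAct.mk.symm fun _ => DomMulAct.mem_stabilizer_iff)
  calc _ = Nat.card (orbit (Perm α)ᵈᵐᵃ f) * Nat.card (stabilizer (Perm α)ᵈᵐᵃ f) := by
        rw [hstab, horbit]; rfl
    _ = Nat.card (Perm α)ᵈᵐᵃ := by
        rw [← Nat.card_prod, Nat.card_congr (orbitProdStabilizerEquivGroup _ f)]
    _ = (Fintype.card α)! := by
        rw [Nat.card_congr DomMulAct.mk.symm, Nat.card_eq_fintype_card, Fintype.card_perm]

theorem List.finite_and_ncard_mul_setOf_count_eq [Fintype ι] [DecidableEq ι] (m : ℕ) :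
    {l : List ι | ∀ i, l.count i = m}.Finite ∧
      {l : List ι | ∀ i, l.count i = m}.ncard * (m !) ^ Fintype.card ι =
        (m * Fintype.card ι)! := by
  obtain ⟨N, hN⟩ : ∃ N, N = m * Fintype.card ι := ⟨_, rfl⟩
  rw [← hN]
  let e : Fin N ≃ Fin m × ι := Fintype.equivOfCardEq (by simp [hN])
  let f : Fin N → ι := fun a => (e a).2
  have hf : ∀ i, Fintype.card {a // f a = i} = m := fun i => by
    rw [Fintype.card_congr (e.subtypeEquiv (q := fun p => p.2 = i) fun _ => Iff.rfl)]
    exact (Fintype.card_congr ⟨fun p => p.1.1, fun a => ⟨(a, i), rfl⟩,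
      fun ⟨⟨_, _⟩, h⟩ => by subst h; rfl, fun _ => rfl⟩).trans (Fintype.card_fin m)
  have hset : {l : List ι | ∀ i, l.count i = m} =
      List.ofFn '' {g | ∃ σ : Equiv.Perm (Fin N), f ∘ σ = g} := by
    ext l
    simp only [Set.mem_ofPred_eq, Set.mem_image, exists_perm_comp_eq_iff_card_fiber_eq, hf]
    constructor
    · intro hl
      have hlen := List.length_eq_mul_card_of_count_eq hl
      have hofFn : List.ofFn (fun a : Fin N => l[a.val]'(by omega)) = l :=
        List.ext_getElem (by simp [hlen, hN]) (by simp)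
      exact ⟨_, fun i => by rw [← List.count_ofFn, hofFn, hl], hofFn⟩
    · rintro ⟨g, hg, rfl⟩ i
      rw [List.count_ofFn, hg]
  rw [hset, Set.ncard_image_of_injective _ List.ofFn_injective, ← Nat.card_coe_set_eq]
  refine ⟨(Set.toFinite _).image _, ?_⟩
  have := card_comp_perm_mul_prod_factorial f
  simp only [hf, Finset.prod_const, Finset.card_univ, Fintype.card_fin] at this
  exact this

end Orbit

namespace PatternAvoidance

variable {A : Type*}

def HasSpacedTriple (W : List A) : Prop :=
  ∃ (a : A) (i j l : ℕ), i + 2 ≤ j ∧ j + 2 ≤ l ∧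
    W[i]? = some a ∧ W[j]? = some a ∧ W[l]? = some a

lemma containsPat_two_iff_exists_eq_append (W : List A) :
    ContainsPat 2 W ↔ ∃ (a : A) (P u v Q : List A), u ≠ [] ∧ v ≠ [] ∧
      W = P ++ a :: (u ++ a :: (v ++ a :: Q)) := by
  constructor
  · rintro ⟨F, ⟨P, Q, rfl⟩, X, Y, hX, hY, rfl⟩
    obtain ⟨a, X', rfl⟩ := List.exists_cons_of_ne_nil hX
    refine ⟨a, P, X' ++ Y 0, X' ++ Y 1, X' ++ Q, by simp [hY], by simp [hY], ?_⟩
    simp [List.ofFn_succ]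
  · rintro ⟨a, P, u, v, Q, hu, hv, rfl⟩
    refine ⟨a :: (u ++ a :: (v ++ [a])), ⟨P, Q, by simp⟩,
      [a], ![u, v], by simp, fun i => by fin_cases i <;> simpa, by simp [List.ofFn_succ]⟩

lemma containsPat_two_iff (W : List A) : ContainsPat 2 W ↔ HasSpacedTriple W := by
  rw [containsPat_two_iff_exists_eq_append]
  constructor
  · rintro ⟨a, P, u, v, Q, hu, hv, rfl⟩
    have hu := List.length_pos_iff_ne_nil.mpr hu
    have hv := List.length_pos_iff_ne_nil.mpr hv
    exact ⟨a, P.length, (P ++ a :: u).length, (P ++ a :: u ++ a :: v).length,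
      by simp; omega, by simp; omega, by simp, by simp, by simp⟩
  · rintro ⟨a, i, j, l, hij, hjl, hi, hj, hl⟩
    obtain ⟨R, Q, rfl, rfl⟩ := List.exists_eq_append_cons_of_getElem?_eq_some hl
    rw [List.getElem?_append_left (by omega)] at hj
    obtain ⟨S, v, rfl, rfl⟩ := List.exists_eq_append_cons_of_getElem?_eq_some hj
    rw [List.getElem?_append_left (by simp; omega), List.getElem?_append_left (by omega)] at hi
    obtain ⟨P, u, rfl, rfl⟩ := List.exists_eq_append_cons_of_getElem?_eq_some hi
    refine ⟨a, P, u, v, Q, ?_, ?_, by simp⟩ <;>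
      (rw [← List.length_pos_iff_ne_nil]; simp at hij hjl; omega)

lemma extends_iff {W E : List A} :
    Extends W E ↔ ∃ p ≤ W.length, ∃ x, E = W.insertIdx p x := by
  constructor
  · rintro ⟨W₁, W₂, x, rfl, rfl⟩
    exact ⟨W₁.length, by simp, x, (List.insertIdx_length_append W₁ W₂ x).symm⟩
  · rintro ⟨p, hp, x, rfl⟩
    refine ⟨W.take p, W.drop p, x, (List.take_append_drop p W).symm, ?_⟩
    conv_lhs => rw [← List.take_append_drop p W]
    rw [← List.insertIdx_length_append, List.length_take_of_le hp]

/-- Either the inserted letter belongs to the new triple, or the insertion pulled apart two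
adjacent occurrences `W[p - 1] = W[p]` of a letter that has a third occurrence far enough away. -/
lemma hasSpacedTriple_insertIdx {W : List A} {p : ℕ} {x : A} (hp : p ≤ W.length)
    (hW : ¬ HasSpacedTriple W) (h : HasSpacedTriple (W.insertIdx p x)) :
    (∃ i j, W[i]? = some x ∧ W[j]? = some x ∧
      (p + 1 ≤ i ∧ i + 2 ≤ j ∨ i + 2 ≤ p ∧ p + 1 ≤ j ∨ i + 2 ≤ j ∧ j + 2 ≤ p)) ∨
    (∃ a l, W[p - 1]? = some a ∧ W[p]? = some a ∧ W[l]? = some a ∧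
      0 < p ∧ (p + 2 ≤ l ∨ l + 3 ≤ p)) := by
  obtain ⟨a, i, j, l, hij, hjl, hi, hj, hl⟩ := h
  simp only [List.getElem?_insertIdx_eq_some_iff hp] at hi hj hl
  rcases hi with ⟨hi, hi'⟩ | ⟨rfl, rfl⟩ | ⟨hi, hi'⟩ <;>
    rcases hj with ⟨hj, hj'⟩ | ⟨rfl, hj'⟩ | ⟨hj, hj'⟩ <;>
    rcases hl with ⟨hl, hl'⟩ | ⟨rfl, hl'⟩ | ⟨hl, hl'⟩
  all_goals try omega
  · exact absurd ⟨a, i, j, l, hij, hjl, hi', hj', hl'⟩ hW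
  · subst hl'
    exact .inl ⟨i, j, hi', hj', by omega⟩
  · by_cases hgap : j + 2 ≤ l - 1
    · exact absurd ⟨a, i, j, l - 1, hij, hgap, hi', hj', hl'⟩ hW
    · obtain rfl : j = p - 1 := by omega
      exact .inr ⟨a, i, hj', by rwa [show p = l - 1 by omega], hi', by omega, by omega⟩
  · subst hj'
    exact .inl ⟨i, l - 1, hi', hl', by omega⟩
  · by_cases hgap : i + 2 ≤ j - 1
    · exact absurd ⟨a, i, j - 1, l - 1, hgap, by omega, hi', hj', hl'⟩ hW
    · obtain rfl : i = p - 1 := by omega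
      exact .inr ⟨a, l - 1, hi', by rwa [show p = j - 1 by omega], hl', by omega, by omega⟩
  · exact .inl ⟨j - 1, l - 1, hj', hl', by omega⟩
  · exact absurd ⟨a, i - 1, j - 1, l - 1, by omega, by omega, hi', hj', hl'⟩ hW

def double (w : List A) : List A := w.flatMap fun a => [a, a]

@[simp] lemma double_nil : double ([] : List A) = [] := rfl

@[simp] lemma double_cons (a : A) (w : List A) : double (a :: w) = a :: a :: double w := rfl

lemma getElem?_double (w : List A) (i : ℕ) : (double w)[i]? = w[i / 2]? := by
  induction w generalizing i with
  | nil => simp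
  | cons b w ih =>
    match i with
    | 0 | 1 => simp
    | i + 2 => simp [ih, show (i + 2) / 2 = i / 2 + 1 by omega]

lemma double_injective : Function.Injective (double (A := A)) := fun w w' h =>
  List.ext_getElem? fun q => by simpa [getElem?_double] using congrArg (·[2 * q]?) h

lemma count_double [DecidableEq A] (w : List A) (x : A) :
    (double w).count x = 2 * w.count x := by
  induction w with
  | nil => simp
  | cons b w ih => simp only [double_cons, List.count_cons, ih]; split_ifs <;> omega

lemma exists_eq_double : ∀ {W : List A}, (∀ q, W[2 * q]? = W[2 * q + 1]?) → ∃ w, W = double w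
  | [], _ => ⟨[], rfl⟩
  | [a], h => by simpa using h 0
  | a :: b :: W, h => by
    obtain ⟨w, rfl⟩ := exists_eq_double fun q => by simpa [Nat.mul_add] using h (q + 1)
    obtain rfl : a = b := by simpa using h 0
    exact ⟨a :: w, rfl⟩

theorem extremalPat_two_double [DecidableEq A] {w : List A} (hw : ∀ x, w.count x = 2) :
    ExtremalPat 2 (double w) := by
  have hocc : ∀ x, ∃ q₁ q₂ : ℕ, q₁ < q₂ ∧
      ∀ i, (double w)[i]? = some x ↔ i / 2 = q₁ ∨ i / 2 = q₂ := fun x => by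
    obtain ⟨q₁, q₂, hlt, hq⟩ := List.exists_getElem?_eq_some_iff_of_count_eq_two (hw x)
    exact ⟨q₁, q₂, hlt, fun i => by rw [getElem?_double, hq]⟩
  refine ⟨fun h => ?_, fun E hE => ?_⟩
  · obtain ⟨a, i, j, l, hij, hjl, hi, hj, hl⟩ := (containsPat_two_iff _).mp h
    obtain ⟨q₁, q₂, -, hq⟩ := hocc a
    rw [hq] at hi hj hl
    omega
  · obtain ⟨p, hp, x, rfl⟩ := extends_iff.mp hE
    obtain ⟨q₁, q₂, hlt, hq⟩ := hocc x
    refine (containsPat_two_iff _).mpr ⟨x, ?_⟩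
    simp only [List.getElem?_insertIdx_eq_some_iff hp, hq, and_true]
    rcases (show p ≤ 2 * q₁ ∨ p = 2 * q₁ + 1 ∨ 2 * q₁ + 2 ≤ p ∧ p ≤ 2 * q₂ ∨ p = 2 * q₂ + 1 ∨
        2 * q₂ + 2 ≤ p by omega) with h | h | h | h | h
    · exact ⟨p, 2 * q₁ + 2, 2 * q₂ + 2, by omega⟩
    · exact ⟨2 * q₁, 2 * q₁ + 2, 2 * q₂ + 2, by omega⟩
    · exact ⟨2 * q₁, p, 2 * q₂ + 2, by omega⟩
    · exact ⟨2 * q₁, 2 * q₂, 2 * q₂ + 2, by omega⟩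
    · exact ⟨2 * q₁, 2 * q₂, p, by omega⟩

lemma exists_spaced_getElem?_eq_some_of_extremalPat_two {W : List A} (hW : ExtremalPat 2 W)
    (x : A) : ∃ j l, W[j]? = some x ∧ W[l]? = some x ∧ j + 2 ≤ l := by
  have h := (containsPat_two_iff _).mp (hW.2 _ (extends_iff.mpr ⟨0, Nat.zero_le _, x, rfl⟩))
  rcases hasSpacedTriple_insertIdx (Nat.zero_le _) ((containsPat_two_iff W).not.mp hW.1) h with
    ⟨i, j, hi, hj, h⟩ | ⟨-, -, -, -, -, h, -⟩
  · exact ⟨i, j, hi, hj, by omega⟩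
  · omega

theorem getElem?_eq_some_iff_of_extremalPat_two {W : List A} (hW : ExtremalPat 2 W) (x : A) :
    ∃ s t : ℕ, s + 3 ≤ t ∧ ∀ i, W[i]? = some x ↔ i = s ∨ i = s + 1 ∨ i = t - 1 ∨ i = t := by
  classical
  have hW₀ : ¬ HasSpacedTriple W := (containsPat_two_iff W).not.mp hW.1
  have hins := fun p (hp : p ≤ W.length) => hasSpacedTriple_insertIdx hp hW₀
    ((containsPat_two_iff _).mp (hW.2 _ (extends_iff.mpr ⟨p, hp, x, rfl⟩)))
  have hlt : ∀ {i}, W[i]? = some x → i < W.length := fun h => (List.getElem?_eq_some_iff.mp h).1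
  obtain ⟨j₀, l₀, hj₀, hl₀, -⟩ := exists_spaced_getElem?_eq_some_of_extremalPat_two hW x
  have hex : ∃ i, W[i]? = some x := ⟨j₀, hj₀⟩
  set s := Nat.find hex
  set t := Nat.findGreatest (fun i => W[i]? = some x) W.length
  have hs : W[s]? = some x := Nat.find_spec hex
  have hs_le : ∀ {i}, W[i]? = some x → s ≤ i := fun h => Nat.find_min' hex h
  have ht : W[t]? = some x := Nat.findGreatest_spec (P := fun i => W[i]? = some x) (hlt hl₀).le hl₀
  have hle_t : ∀ {i}, W[i]? = some x → i ≤ t := fun h => Nat.le_findGreatest (hlt h).le h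
  have hmid : ∀ {j}, W[j]? = some x → j ≤ s + 1 ∨ t ≤ j + 1 := fun {j} hj => by
    by_contra! h
    exact hW₀ ⟨x, s, j, t, by omega, by omega, hs, hj, ht⟩
  have htW := hlt ht
  have hst₀ := hs_le ht
  obtain ⟨hs₁, hst⟩ : W[s + 1]? = some x ∧ s + 3 ≤ t := by
    rcases hins (s + 1) (by omega) with ⟨i, j, hi, hj, h⟩ | ⟨a, l, ha, ha₁, hl, -, h⟩
    · have := hs_le hi; have := hmid hi; have := hle_t hj; omega
    · rw [Nat.add_sub_cancel] at ha
      obtain rfl : a = x := Option.some.inj (ha.symm.trans hs)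
      have := hs_le hl; have := hle_t hl
      exact ⟨ha₁, by omega⟩
  have ht₁ : W[t - 1]? = some x := by
    rcases hins t htW.le with ⟨i, j, hi, hj, h⟩ | ⟨a, l, ha, ha₁, -, -, -⟩
    · have := hs_le hi; have := hmid hj; have := hle_t hj; omega
    · obtain rfl : a = x := Option.some.inj (ha₁.symm.trans ht)
      exact ha
  refine ⟨s, t, hst, fun i => ⟨fun hi => ?_, ?_⟩⟩
  · have := hs_le hi; have := hle_t hi; have := hmid hi; omega
  · rintro (rfl | rfl | rfl | rfl) <;> assumption

theorem exists_double_of_extremalPat_two [DecidableEq A] {W : List A} (hW : ExtremalPat 2 W) :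
    ∃ w, (∀ x, w.count x = 2) ∧ W = double w := by
  choose s t hst hocc using getElem?_eq_some_iff_of_extremalPat_two hW
  -- if `2 * q` were `s x + 1` or `t x`, then `2 * q - 2` would start a block of `x` too
  have hblock : ∀ q x, W[2 * q]? = some x → 2 * q = s x ∨ 2 * q = t x - 1 := by
    intro q
    induction q using Nat.strong_induction_on with
    | _ q ih =>
      intro x hx
      have hx' := (hocc x _).mp hx
      by_contra hne
      have := hst x
      have hprev : W[2 * q - 1]? = some x := (hocc x _).mpr (by omega)
      have hqW := (List.getElem?_eq_some_iff.mp hx).1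
      obtain ⟨y, hy⟩ : ∃ y, W[2 * (q - 1)]? = some y :=
        ⟨_, List.getElem?_eq_getElem (by omega : 2 * (q - 1) < W.length)⟩
      have hy' := ih (q - 1) (by omega) y hy
      have := hst y
      obtain rfl : y = x :=
        Option.some.inj (((hocc y _).mpr (by omega)).symm.trans hprev)
      omega
  have hpair : ∀ q, W[2 * q]? = W[2 * q + 1]? := by
    intro q
    cases hq : W[2 * q]? with
    | none => exact (List.getElem?_eq_none (by have := List.getElem?_eq_none_iff.mp hq; omega)).symm
    | some x => exact ((hocc x _).mpr (by have := hblock q x hq; have := hst x; omega)).symm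
  obtain ⟨w, rfl⟩ := exists_eq_double hpair
  refine ⟨w, fun x => ?_, rfl⟩
  have hst := hst x
  have h4 : (double w).count x = 4 := by
    rw [List.count_eq_card_of_getElem?_eq_some_iff (S := {s x, s x + 1, t x - 1, t x})
      fun i => by simp [hocc]]
    rw [Finset.card_insert_of_notMem, Finset.card_insert_of_notMem, Finset.card_pair] <;>
      simp <;> omega
  rw [count_double] at h4
  omega

theorem extremalPat_two_iff [DecidableEq A] {W : List A} :
    ExtremalPat 2 W ↔ ∃ w, (∀ x, w.count x = 2) ∧ W = double w :=
  ⟨exists_double_of_extremalPat_two, fun ⟨_, hw, hW⟩ => hW ▸ extremalPat_two_double hw⟩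

end PatternAvoidance

open PatternAvoidance

theorem stmt8_general (k : ℕ) :
    {W : List (Fin k) | ExtremalPat 2 W}.Finite ∧
    {W : List (Fin k) | ExtremalPat 2 W}.ncard = Nat.factorial (2 * k) / 2 ^ k := by
  have hset : {W : List (Fin k) | ExtremalPat 2 W} = double '' {w | ∀ x, w.count x = 2} := by
    ext W
    simp only [Set.mem_ofPred_eq, Set.mem_image, extremalPat_two_iff, eq_comm]
  obtain ⟨hfin, hcard⟩ := List.finite_and_ncard_mul_setOf_count_eq (ι := Fin k) 2
  rw [Fintype.card_fin, Nat.factorial_two] at hcard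
  rw [hset, Set.ncard_image_of_injective _ double_injective]
  exact ⟨hfin.image _, (Nat.div_eq_of_eq_mul_left (by positivity) hcard.symm).symm⟩

theorem stmt8 (k : ℕ) (hk : 1 ≤ k) :
    {W : List (Fin k) | ExtremalPat 2 W}.Finite ∧
    {W : List (Fin k) | ExtremalPat 2 W}.ncard = Nat.factorial (2 * k) / 2 ^ k :=
  stmt8_general k
end

section
/- Lemma 3.2 (almost-square growth): Let WW' be an almost-square over an alphabet A, and let V be a word over A such that WW'V is an almost-square XX'. If 4 ≤ |V| ≤ |W|/2, then the word XX' = WW'V contains a square (is not square-free). -/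
private lemma extends_get? {A : Type*} {U E : List A} (h : Extends U E) :
    ∃ d, d ≤ U.length ∧ E.length = U.length + 1 ∧
      (∀ j < d, E[j]? = U[j]?) ∧ (∀ j, d ≤ j → E[j+1]? = U[j]?) := by
  obtain ⟨U₁, U₂, x, rfl, rfl⟩ := h
  refine ⟨U₁.length, by simp, by simp; omega, ?_, ?_⟩
  · intro j hj
    rw [List.getElem?_append_left (Nat.lt_of_lt_of_le hj (by omega)),
        List.getElem?_append_left hj]
  · intro j hj
    rw [List.getElem?_append_right (by omega), List.getElem?_append_right hj,
        show j + 1 - U₁.length = (j - U₁.length) + 1 by omega]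
    simp

private lemma almostSq_facts {A : Type*} (U U' T : List A) (h : AlmostSq U U') :
    ∃ d d' : ℕ, d ≤ U.length ∧ d ≤ U'.length ∧
      ((U'.length = U.length + 1 ∧ d' = d) ∨ (U.length = U'.length + 1 ∧ d' = d + 1)) ∧
      (∀ j < d, (U ++ U' ++ T)[U.length + j]? = (U ++ U' ++ T)[j]?) ∧
      (∀ j, d' ≤ j → j < U.length → (U ++ U' ++ T)[U'.length + j]? = (U ++ U' ++ T)[j]?) := by
  have hl1 : ∀ j < U.length, (U ++ U' ++ T)[j]? = U[j]? := by
    intro j hj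
    rw [List.getElem?_append_left (by simp; omega), List.getElem?_append_left hj]
  have hl2 : ∀ j < U'.length, (U ++ U' ++ T)[U.length + j]? = U'[j]? := by
    intro j hj
    rw [List.getElem?_append_left (by simp; omega),
        List.getElem?_append_right (by omega)]
    congr 1
    omega
  rcases h with hE | hE
  · obtain ⟨d, hd, hlen, h1, h2⟩ := extends_get? hE
    refine ⟨d, d, hd, by omega, Or.inl ⟨hlen, rfl⟩, ?_, ?_⟩
    · intro j hj
      rw [hl2 j (by omega), h1 j hj, ← hl1 j (by omega)]
    · intro j hj hj2
      rw [show U'.length + j = U.length + (j + 1) by omega, hl2 (j+1) (by omega),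
          h2 j hj, ← hl1 j hj2]
  · obtain ⟨d, hd, hlen, h1, h2⟩ := extends_get? hE
    refine ⟨d, d + 1, by omega, hd, Or.inr ⟨hlen, rfl⟩, ?_, ?_⟩
    · intro j hj
      rw [hl2 j (by omega), ← h1 j hj, ← hl1 j (by omega)]
    · intro j hj hj2
      rw [show U'.length + j = U.length + (j - 1) by omega, hl2 (j-1) (by omega),
          ← h2 (j-1) (by omega), show j - 1 + 1 = j by omega, ← hl1 j hj2]

private lemma segment_square {A : Type*} (l : List A) (c p : ℕ) (hp : 1 ≤ p)
    (hle : c + (p + p) ≤ l.length) (hper : ∀ t < p, l[c + t]? = l[c + t + p]?) :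
    HasSquare l := by
  set S := (l.drop c).take p with hS
  have hlen : S.length = p := by simp [hS]; omega
  refine ⟨S, by intro h; rw [h] at hlen; simp at hlen; omega, ?_⟩
  have hSS : S ++ S = (l.drop c).take (p + p) := by
    apply List.ext_getElem?
    intro n
    rcases lt_or_ge n p with hn | hn
    · rw [List.getElem?_append_left (by omega), hS, List.getElem?_take, List.getElem?_take,
          if_pos hn, if_pos (by omega : n < p + p)]
    · rcases lt_or_ge n (p + p) with hn2 | hn2
      · rw [List.getElem?_append_right (by omega), hS, List.getElem?_take, List.getElem?_take,
            hlen, if_pos (by omega : n - p < p), if_pos hn2, List.getElem?_drop,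
            List.getElem?_drop]
        have h := hper (n - p) (by omega)
        rw [show c + n = c + (n - p) + p by omega, ← h]
      · rw [List.getElem?_eq_none (by simp [hlen]; omega),
            List.getElem?_eq_none (by simp; omega)]
  rw [hSS]
  exact ((List.take_prefix _ _).isInfix).trans (List.drop_suffix c l).isInfix

theorem stmt14 {A : Type*} (W W' V X X' : List A)
    (heq : W ++ W' ++ V = X ++ X')
    (hW : AlmostSq W W') (hX : AlmostSq X X')
    (hV4 : 4 ≤ V.length) (hVW : 2 * V.length ≤ W.length) :
    HasSquare (W ++ W' ++ V) := by
  have hXfacts := almostSq_facts X X' [] hX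
  rw [show X ++ X' ++ ([] : List A) = W ++ W' ++ V by rw [List.append_nil, heq]] at hXfacts
  obtain ⟨d, d', hda, hda', hWcase, HW1, HW2⟩ := almostSq_facts W W' V hW
  obtain ⟨e, e', heb, heb', hXcase, HX1, HX2⟩ := hXfacts
  have hlen1 : (W ++ W' ++ V).length = W.length + W'.length + V.length := by simp [Nat.add_assoc]
  have hlen2 : (W ++ W' ++ V).length = X.length + X'.length := by rw [heq]; simp
  obtain ⟨q0, hq0, hq0'⟩ : ∃ q0, X.length = W.length + q0 ∧ 1 ≤ q0 :=
    ⟨X.length - W.length, by omega, by omega⟩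
  obtain ⟨qp, hqp, hqp'⟩ : ∃ qp, X'.length = W'.length + qp ∧ 1 ≤ qp :=
    ⟨X'.length - W'.length, by omega, by omega⟩
  obtain ⟨p1, hp1, hp1'⟩ : ∃ p1, X.length = W'.length + p1 ∧ 1 ≤ p1 :=
    ⟨X.length - W'.length, by omega, by omega⟩
  obtain ⟨p2, hp2, hp2'⟩ : ∃ p2, X'.length = W.length + p2 ∧ 1 ≤ p2 :=
    ⟨X'.length - W.length, by omega, by omega⟩
  by_cases hc1 : q0 ≤ e ∧ 2 * q0 ≤ d
  · refine segment_square _ 0 q0 hq0' (by omega) ?_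
    intro t ht
    have h1 := HX1 t (by omega)
    have h2 := HW1 (t + q0) (by omega)
    rw [show (0:ℕ) + t = t by omega, ← h1,
        show X.length + t = W.length + (t + q0) by omega, h2]
  by_cases hc2 : W.length < e' + 2 * qp
  · refine segment_square _ (d' - p1) p1 hp1' (by omega) ?_
    intro t ht
    have h1 := HX1 (d' - p1 + t) (by omega)
    have h2 := HW2 (d' - p1 + t + p1) (by omega) (by omega)
    rw [← h1, show X.length + (d' - p1 + t) = W'.length + (d' - p1 + t + p1) by omega, h2]
  by_cases hc3 : W.length < d' + qp
  · refine segment_square _ e' p2 hp2' (by omega) ?_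
    intro t ht
    have h1 := HX2 (e' + t) (by omega) (by omega)
    have h2 := HW1 (e' + t + p2) (by omega)
    rw [← h1, show X'.length + (e' + t) = W.length + (e' + t + p2) by omega, h2]
  · refine segment_square _ (max e' (d' - qp)) qp hqp' (by omega) ?_
    intro t ht
    have h1 := HX2 (max e' (d' - qp) + t) (by omega) (by omega)
    have h2 := HW2 (max e' (d' - qp) + t + qp) (by omega) (by omega)
    rw [← h1,
        show X'.length + (max e' (d' - qp) + t) = W'.length + (max e' (d' - qp) + t + qp) by omega,
        h2]
end

section
/- If a square-free word Q contains two almost-square factors starting at the same position with lengths a < a' satisfying a' - a ≥ 4, then a' > (5/4)·a. (Consequently, writing the increasing sequence of lengths of almost-square prefixes at a fixed position as a₁ < a₂ < …, one has a_{i+2} ≥ (5/4)·a_i for all i.) -/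
/-!
If `WW'` and `XX' = WW'V` are almost-squares in `P = XX'`, every position `i < |W|` other than
the insertion or deletion points `p` of `WW'` and `q` of `XX'` satisfies
`P[i + s] = P[i] = P[i + s']` with `s ∈ {|W|, |W'|}` and `s' ∈ {|X|, |X'|}`. So `P` has period
`s' - s` on each of the three intervals into which `p` and `q` cut `[0, |W|)`. These periods are
about `|V|/2` each, so when `2|V| ≤ |W|` their sum is at most `|W|`, and some interval is at least
as long as its period; that interval carries a square. If `4|XX'| ≤ 5|WW'|` then `2|V| ≤ |W|`.
-/
section

variable {A : Type*}

theorem hasSquare_of_period (P : List A) {j d : ℕ} (hd : 0 < d) (hlen : j + 2 * d ≤ P.length)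
    (hper : ∀ t, j ≤ t → t < j + d → P[t + d]? = P[t]?) : HasSquare P := by
  set U := (P.drop j).take d
  have hU : (P.drop (j + d)).take d = U := by
    refine List.ext_getElem? fun i => ?_
    simp only [U, List.getElem?_take, List.getElem?_drop]
    split_ifs with hi
    · rw [← hper (j + i) (by omega) (by omega)]; congr 1; omega
    · rfl
  refine ⟨U, fun h => ?_, ?_⟩
  · have : U.length = d := by simp only [U, List.length_take, List.length_drop]; omega
    rw [h, List.length_nil] at this; omega
  · have hUU : U ++ U = (P.drop j).take (d + d) := by
      rw [List.take_add, List.drop_drop, hU]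
    rw [hUU]
    exact (List.take_prefix _ _).isInfix.trans (List.drop_suffix _ _).isInfix

theorem hasSquare_of_shift (P : List A) {lo s s' : ℕ} (hs : s < s')
    (hlen : lo + s' + (s' - s) ≤ P.length)
    (h : ∀ i, lo ≤ i → i < lo + (s' - s) → P[i + s]? = P[i + s']?) : HasSquare P := by
  refine hasSquare_of_period P (j := lo + s) (d := s' - s) (by omega) (by omega) fun t ht ht' => ?_
  have := h (t - s) (by omega) (by omega)
  rw [show t - s + s = t by omega, show t - s + s' = t + (s' - s) by omega] at this
  exact this.symm

theorem Extends.length_eq {W E : List A} (h : Extends W E) : E.length = W.length + 1 := by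
  obtain ⟨W₁, W₂, x, rfl, rfl⟩ := h
  simp only [List.length_append, List.length_cons]; omega

theorem Extends.getElem?_eq {W E : List A} (h : Extends W E) :
    ∃ k ≤ W.length, (∀ i < k, E[i]? = W[i]?) ∧ ∀ i, k ≤ i → E[i + 1]? = W[i]? := by
  obtain ⟨W₁, W₂, x, rfl, rfl⟩ := h
  refine ⟨W₁.length, by simp, fun i hi => ?_, fun i hi => ?_⟩
  · simp [List.getElem?_append, hi]
  · simp [List.getElem?_append, show ¬ i < W₁.length by omega,
      show ¬ i + 1 < W₁.length by omega, show i + 1 - W₁.length = i - W₁.length + 1 by omega]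

theorem AlmostSq.length_eq {W W' : List A} (h : AlmostSq W W') :
    W'.length = W.length + 1 ∨ W.length = W'.length + 1 :=
  h.imp Extends.length_eq Extends.length_eq

theorem List.getElem?_append_append_of_lt {W W' T : List A} {i : ℕ} (hi : i < W.length) :
    (W ++ W' ++ T)[i]? = W[i]? := by
  simp [List.getElem?_append, hi]

theorem List.getElem?_append_append_add {W W' T : List A} {i : ℕ} (hi : i < W'.length) :
    (W ++ W' ++ T)[i + W.length]? = W'[i]? := by
  simp [List.getElem?_append, hi]

theorem AlmostSq.getElem?_eq {W W' : List A} (h : AlmostSq W W') (T : List A) :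
    ∃ k ≤ W.length,
      (∀ i < k, (W ++ W' ++ T)[i + W.length]? = (W ++ W' ++ T)[i]?) ∧
      ∀ i, k < i → i < W.length → (W ++ W' ++ T)[i + W'.length]? = (W ++ W' ++ T)[i]? := by
  rcases h with h | h
  · obtain ⟨k, hk, hlt, hge⟩ := Extends.getElem?_eq h
    have hlen := Extends.length_eq h
    refine ⟨k, hk, fun i hi => ?_, fun i hi hi' => ?_⟩
    · rw [List.getElem?_append_append_add (by omega),
        List.getElem?_append_append_of_lt (by omega), hlt i hi]
    · rw [hlen, ← add_assoc, add_right_comm, List.getElem?_append_append_add (by omega),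
        List.getElem?_append_append_of_lt hi', hge i hi.le]
  · obtain ⟨k, hk, hlt, hge⟩ := Extends.getElem?_eq h
    have hlen := Extends.length_eq h
    refine ⟨k, by omega, fun i hi => ?_, fun i hi hi' => ?_⟩
    · rw [List.getElem?_append_append_add (by omega), List.getElem?_append_append_of_lt (by omega),
        ← hlt i hi]
    · rw [show i + W'.length = i - 1 + W.length by omega,
        List.getElem?_append_append_add (by omega), List.getElem?_append_append_of_lt hi',
        ← hge (i - 1) (by omega), Nat.sub_add_cancel (by omega)]

end

theorem hasSquare_of_almostSq_append {A : Type*} {W W' X X' V : List A} (hW : AlmostSq W W')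
    (hX : AlmostSq X X') (hsame : X ++ X' = W ++ W' ++ V) (hV : 4 ≤ V.length)
    (hVW : 2 * V.length ≤ W.length) : HasSquare (X ++ X') := by
  obtain ⟨p, hp, hW₁, hW₂⟩ := hW.getElem?_eq V
  obtain ⟨q, hq, hX₁, hX₂⟩ := hX.getElem?_eq []
  rw [List.append_nil] at hX₁ hX₂
  rw [← hsame] at hW₁ hW₂
  have hlen : X.length + X'.length = W.length + W'.length + V.length := by
    simpa [Nat.add_assoc] using congrArg List.length hsame
  have := hW.length_eq
  have := hX.length_eq
  rcases (by omega : X.length - W.length ≤ min p q ∨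
      (p < q ∧ p + 1 + (X.length - W'.length) ≤ min q W.length) ∨
      (q < p ∧ q + 1 + (X'.length - W.length) ≤ p) ∨
      max p q + 1 + (X'.length - W'.length) ≤ W.length) with h | h | h | h
  · exact hasSquare_of_shift _ (lo := 0) (by omega) (by rw [List.length_append]; omega)
      fun i _ hi => (hW₁ i (by omega)).trans (hX₁ i (by omega)).symm
  · exact hasSquare_of_shift _ (lo := p + 1) (by omega) (by rw [List.length_append]; omega)
      fun i hi hi' => (hW₂ i (by omega) (by omega)).trans (hX₁ i (by omega)).symm
  · exact hasSquare_of_shift _ (lo := q + 1) (by omega) (by rw [List.length_append]; omega)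
      fun i hi hi' => (hW₁ i (by omega)).trans (hX₂ i (by omega) (by omega)).symm
  · exact hasSquare_of_shift _ (lo := max p q + 1) (by omega) (by rw [List.length_append]; omega)
      fun i hi hi' => (hW₂ i (by omega) (by omega)).trans (hX₂ i (by omega) (by omega)).symm

theorem stmt15 {A : Type*} (Q : List A) (hQ : SquareFree Q)
    (W W' X X' V : List A) (hWW : AlmostSq W W') (hXX : AlmostSq X X')
    (hsame : X ++ X' = W ++ W' ++ V) (hinf : X ++ X' <:+: Q)
    (hdiff : (W ++ W').length + 4 ≤ (X ++ X').length) :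
    ((X ++ X').length : ℚ) > 5 / 4 * ((W ++ W').length : ℚ) := by
  by_contra hle
  rw [gt_iff_lt, not_lt] at hle
  have h45 : 4 * (X ++ X').length ≤ 5 * (W ++ W').length := by
    exact_mod_cast (by linarith : (4 * (X ++ X').length : ℚ) ≤ 5 * (W ++ W').length)
  have hlen := congrArg List.length hsame
  have := hWW.length_eq
  simp only [List.length_append] at hlen hdiff h45
  obtain ⟨U, hU, hUX⟩ := hasSquare_of_almostSq_append hWW hXX hsame (by omega) (by omega)
  exact hQ ⟨U, hU, hUX.trans hinf⟩
end

section
/- For any square-free word Q of length n ≥ 2 and any fixed starting position p in Q, the number of almost-square factors of Q that start at position p is less than 2·log_{5/4}(n). -/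
namespace Stmt16Aux

variable {A : Type*}

lemma hasSquare_of_eqs (q : List A) (s c : ℕ) (hc : 1 ≤ c)
    (hlen : s + 2 * c ≤ q.length)
    (heq : ∀ i < c, q[s + i]? = q[s + c + i]?) : HasSquare q := by
  set X : List A := (q.drop s).take c with hX
  have hlenX : X.length = c := by
    simp only [hX, List.length_take, List.length_drop]
    omega
  have hX2 : (q.drop (s + c)).take c = X := by
    apply List.ext_getElem?
    intro i
    rcases lt_or_ge i c with hi | hi
    · rw [List.getElem?_take_of_lt hi, hX, List.getElem?_take_of_lt hi,
        List.getElem?_drop, List.getElem?_drop]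
      exact (heq i hi).symm
    · rw [List.getElem?_take_eq_none hi, hX, List.getElem?_take_eq_none hi]
  have h1 : q.drop s = X ++ q.drop (s + c) := by
    conv_lhs => rw [← List.take_append_drop c (q.drop s)]
    rw [List.drop_drop]
  have h2 : q.drop (s + c) = X ++ q.drop (s + 2 * c) := by
    conv_lhs => rw [← List.take_append_drop c (q.drop (s + c)), hX2]
    rw [List.drop_drop]
    congr 2
    omega
  refine ⟨X, ?_, ?_⟩
  · intro h
    rw [h] at hlenX; simp at hlenX; omega
  · have hpre : X ++ X <+: q.drop s := ⟨q.drop (s + 2 * c), by rw [h1, h2, List.append_assoc]⟩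
    exact hpre.isInfix.trans (List.drop_suffix s q).isInfix

/-- Certificate extracted from an almost-square prefix of length `2k+1`. -/
def Cert (q : List A) (k : ℕ) : Prop :=
  2 * k + 1 ≤ q.length ∧ ∃ g u₀ u₁ : ℕ, g ≤ k ∧ u₀ ≤ 1 ∧ u₁ ≤ 1 ∧
    (∀ i, i < g → q[i]? = q[i + k + u₀]?) ∧
    (∀ i, g < i → i < k → q[i]? = q[i + k + u₁]?)

lemma getmid (L M : List A) (i t : ℕ) (h : i = L.length + t) :
    (L ++ M)[i]? = M[t]? := by
  subst h
  rw [List.getElem?_append_right (Nat.le_add_right _ _), Nat.add_sub_cancel_left]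

lemma getcons (x : A) (l : List A) (n t : ℕ) (h : n = t + 1) :
    (x :: l)[n]? = l[t]? := by subst h; simp

lemma cert_of_prefix (q W W' : List A) (h : AlmostSq W W') (hpre : W ++ W' <+: q)
    (k : ℕ) (hk : (W ++ W').length = 2 * k + 1) : Cert q k := by
  obtain ⟨T, hT⟩ := hpre
  rcases h with ⟨W₁, W₂, x, hW, hW'⟩ | ⟨W₁, W₂, x, hW', hW⟩
  · -- insertion type: W = W₁++W₂, W' = W₁++x::W₂
    subst hW hW'
    have hjw : W₁.length + W₂.length = k := by
      simp only [List.length_append, List.length_cons] at hk; omega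
    have hlen : 2 * k + 1 ≤ q.length := by
      rw [← hT]; simp only [List.length_append, List.length_cons]; omega
    refine ⟨hlen, W₁.length, 0, 1, by omega, by omega, by omega, ?_, ?_⟩
    · intro i hi
      rw [← hT]
      have e1 : ((W₁ ++ W₂ ++ (W₁ ++ x :: W₂)) ++ T)[i]? = W₁[i]? := by
        rw [List.getElem?_append_left (by simp; omega),
          List.getElem?_append_left (by simp; omega),
          List.getElem?_append_left (by omega)]
      have e2 : ((W₁ ++ W₂ ++ (W₁ ++ x :: W₂)) ++ T)[i + k + 0]? = W₁[i]? := by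
        rw [List.append_assoc (W₁ ++ W₂)]
        rw [getmid (W₁ ++ W₂) _ (i + k + 0) i (by simp; omega)]
        rw [List.getElem?_append_left (by simp; omega),
          List.getElem?_append_left (by omega)]
      rw [e1, e2]
    · intro i hi hik
      rw [← hT]
      have e1 : ((W₁ ++ W₂ ++ (W₁ ++ x :: W₂)) ++ T)[i]? = W₂[i - W₁.length]? := by
        rw [List.getElem?_append_left (by simp; omega),
          List.append_assoc,
          getmid W₁ _ i (i - W₁.length) (by omega),
          List.getElem?_append_left (by omega)]
      have e2 : ((W₁ ++ W₂ ++ (W₁ ++ x :: W₂)) ++ T)[i + k + 1]? = W₂[i - W₁.length]? := by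
        rw [List.append_assoc (W₁ ++ W₂)]
        rw [getmid (W₁ ++ W₂) _ (i + k + 1) (i + 1) (by simp; omega)]
        rw [List.getElem?_append_left (by simp; omega)]
        rw [getmid W₁ _ (i + 1) (i - W₁.length + 1) (by omega),
          getcons x _ _ (i - W₁.length) rfl]
      rw [e1, e2]
  · -- deletion type: W = W₁++x::W₂, W' = W₁++W₂
    subst hW hW'
    have hjw : W₁.length + W₂.length = k := by
      simp only [List.length_append, List.length_cons] at hk; omega
    have hlen : 2 * k + 1 ≤ q.length := by
      rw [← hT]; simp only [List.length_append, List.length_cons]; omega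
    refine ⟨hlen, W₁.length, 1, 0, by omega, by omega, by omega, ?_, ?_⟩
    · intro i hi
      rw [← hT]
      have e1 : (((W₁ ++ x :: W₂) ++ (W₁ ++ W₂)) ++ T)[i]? = W₁[i]? := by
        rw [List.getElem?_append_left (by simp; omega),
          List.getElem?_append_left (by simp; omega),
          List.getElem?_append_left (by omega)]
      have e2 : (((W₁ ++ x :: W₂) ++ (W₁ ++ W₂)) ++ T)[i + k + 1]? = W₁[i]? := by
        rw [List.append_assoc (W₁ ++ x :: W₂)]
        rw [getmid (W₁ ++ x :: W₂) _ (i + k + 1) i (by simp; omega)]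
        rw [List.getElem?_append_left (by simp; omega),
          List.getElem?_append_left (by omega)]
      rw [e1, e2]
    · intro i hi hik
      rw [← hT]
      have e1 : (((W₁ ++ x :: W₂) ++ (W₁ ++ W₂)) ++ T)[i]? = W₂[i - W₁.length - 1]? := by
        have s1 : (((W₁ ++ x :: W₂) ++ (W₁ ++ W₂)) ++ T)[i]?
            = (x :: (W₂ ++ (W₁ ++ W₂)))[i - W₁.length]? := by
          rw [List.getElem?_append_left (by simp; omega),
            List.append_assoc,
            getmid W₁ _ i (i - W₁.length) (by omega), List.cons_append]
        have s2 : ((x :: (W₂ ++ (W₁ ++ W₂))) : List A)[i - W₁.length]?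
            = (W₂ ++ (W₁ ++ W₂))[i - W₁.length - 1]? :=
          getcons x _ (i - W₁.length) (i - W₁.length - 1) (by omega)
        have s3 : (W₂ ++ (W₁ ++ W₂))[i - W₁.length - 1]? = W₂[i - W₁.length - 1]? :=
          List.getElem?_append_left (by omega)
        rw [s1, s2, s3]
      have e2 : (((W₁ ++ x :: W₂) ++ (W₁ ++ W₂)) ++ T)[i + k + 0]? = W₂[i - W₁.length - 1]? := by
        rw [List.append_assoc (W₁ ++ x :: W₂)]
        rw [getmid (W₁ ++ x :: W₂) _ (i + k + 0) (i - 1) (by simp; omega)]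
        rw [List.getElem?_append_left (by simp; omega)]
        rw [getmid W₁ _ (i - 1) (i - W₁.length - 1) (by omega)]
      rw [e1, e2]

/-- On a piece `[a, b')` where both relations have constant shift, absence of squares
    forces the piece to be short. -/
lemma piece (q : List A) (hsf : SquareFree q) (k m u v a b' : ℕ)
    (hlen : 2 * m + 1 ≤ q.length) (hu : u ≤ 1) (hv : v ≤ 1) (hkm : k + 2 ≤ m)
    (hb : b' ≤ k)
    (h1 : ∀ i, a ≤ i → i < b' → q[i]? = q[i + k + u]?)
    (h2 : ∀ i, a ≤ i → i < b' → q[i]? = q[i + m + v]?) :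
    b' + 1 ≤ a + (m + v - (k + u)) := by
  by_contra hcon
  push_neg at hcon
  set c := m + v - (k + u) with hcdef
  have hc1 : 1 ≤ c := by omega
  have hkuc : k + u + c = m + v := by omega
  apply hsf
  apply hasSquare_of_eqs q (a + k + u) c hc1
  · omega
  · intro i hi
    have hia : a ≤ a + i := Nat.le_add_right _ _
    have hib : a + i < b' := by omega
    have e1 := h1 (a + i) hia hib
    have e2 := h2 (a + i) hia hib
    have h3 : a + k + u + i = a + i + k + u := by omega
    rw [h3, ← e1]
    have h4 : a + k + u + c + i = a + i + (m + v) := by omega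
    rw [h4]
    have h5 : a + i + (m + v) = a + i + m + v := by omega
    rw [h5, ← e2]

/-- The key pair lemma: two almost-square prefixes of lengths `2k+1 < 2m+1` of a
square-free word with `m ≥ k+2` must satisfy `4k ≤ 3m+2`. -/
lemma pair (q : List A) (hsf : SquareFree q) (k m : ℕ)
    (hk : Cert q k) (hm : Cert q m) (hkm : k + 2 ≤ m) :
    4 * k ≤ 3 * m + 2 := by
  by_contra hcon
  push_neg at hcon
  obtain ⟨hlenk, g₁, u₀, u₁, hg₁, hu₀, hu₁, hlow₁, hhigh₁⟩ := hk
  obtain ⟨hlenm, g₂, v₀, v₁, hg₂, hv₀, hv₁, hlow₂, hhigh₂⟩ := hm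
  rcases le_or_gt g₁ g₂ with hgg | hgg
  · have P1 := piece q hsf k m u₀ v₀ 0 g₁ hlenm hu₀ hv₀ hkm hg₁
      (fun i _ hi => hlow₁ i hi) (fun i _ hi => hlow₂ i (lt_of_lt_of_le hi hgg))
    have P2 := piece q hsf k m u₁ v₀ (g₁+1) (min g₂ k) hlenm hu₁ hv₀ hkm (min_le_right _ _)
      (fun i hi hi' => hhigh₁ i (by omega) (by omega))
      (fun i hi hi' => hlow₂ i (by omega))
    have P3 := piece q hsf k m u₁ v₁ (g₂+1) k hlenm hu₁ hv₁ hkm le_rfl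
      (fun i hi hi' => hhigh₁ i (by omega) hi')
      (fun i hi hi' => hhigh₂ i (by omega) (by omega))
    rcases le_total g₂ k with h | h
    · simp only [min_eq_left h] at P2
      omega
    · simp only [min_eq_right h] at P2
      omega
  · have P1 := piece q hsf k m u₀ v₀ 0 g₂ hlenm hu₀ hv₀ hkm (by omega)
      (fun i _ hi => hlow₁ i (by omega)) (fun i _ hi => hlow₂ i hi)
    have P2 := piece q hsf k m u₀ v₁ (g₂+1) g₁ hlenm hu₀ hv₁ hkm hg₁
      (fun i hi hi' => hlow₁ i hi')
      (fun i hi hi' => hhigh₂ i (by omega) (by omega))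
    have P3 := piece q hsf k m u₁ v₁ (g₁+1) k hlenm hu₁ hv₁ hkm le_rfl
      (fun i hi hi' => hhigh₁ i (by omega) hi')
      (fun i hi hi' => hhigh₂ i (by omega) (by omega))
    omega

lemma chain : ∀ (s : ℕ) (K : Finset ℕ) (t : ℝ), 2 ≤ t →
    (∀ k ∈ K, ∀ m ∈ K, k + 2 ≤ m → 4 * k ≤ 3 * m + 2) →
    (∀ k ∈ K, t ≤ (k : ℝ)) → 2 * s + 1 ≤ K.card →
    ∃ m ∈ K, (4 / 3 : ℝ) ^ s * (t - 2) ≤ (m : ℝ) - 2 := by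
  intro s
  induction s with
  | zero =>
    intro K t ht hprop hlb hcard
    have hne : K.Nonempty := Finset.card_pos.mp (by omega)
    obtain ⟨m, hm⟩ := hne
    exact ⟨m, hm, by simpa using sub_le_sub_right (hlb m hm) 2⟩
  | succ s ih =>
    intro K t ht hprop hlb hcard
    have hne : K.Nonempty := Finset.card_pos.mp (by omega)
    set k₁ := K.min' hne with hk₁
    have hk₁K : k₁ ∈ K := K.min'_mem hne
    set K2 := K.erase k₁ with hK2
    have hcard2 : K2.card = K.card - 1 := Finset.card_erase_of_mem hk₁K
    have hne2 : K2.Nonempty := Finset.card_pos.mp (by omega)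
    set k₂ := K2.min' hne2 with hk₂
    have hk₂K2 : k₂ ∈ K2 := K2.min'_mem hne2
    have hk₂K : k₂ ∈ K := Finset.mem_of_mem_erase hk₂K2
    set K3 := K2.erase k₂ with hK3
    have hcard3 : K3.card = K2.card - 1 := Finset.card_erase_of_mem hk₂K2
    have hsub : K3 ⊆ K := fun a ha => Finset.mem_of_mem_erase (Finset.mem_of_mem_erase ha)
    have hk₂gt : k₁ + 1 ≤ k₂ := by
      have h1 : k₁ ≤ k₂ := K.min'_le k₂ hk₂K
      have h2 : k₂ ≠ k₁ := Finset.ne_of_mem_erase hk₂K2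
      omega
    have hstep : ∀ a ∈ K3, k₁ + 2 ≤ a := by
      intro a ha
      have h1 : k₂ ≤ a := K2.min'_le a (Finset.mem_of_mem_erase ha)
      have h2 : a ≠ k₂ := Finset.ne_of_mem_erase ha
      omega
    have hlb3 : ∀ a ∈ K3, (4 / 3 : ℝ) * (t - 2) + 2 ≤ (a : ℝ) := by
      intro a ha
      have hp := hprop k₁ hk₁K a (hsub ha) (hstep a ha)
      have hk₁t : t ≤ (k₁ : ℝ) := hlb k₁ hk₁K
      have hcast : 4 * (k₁ : ℝ) ≤ 3 * (a : ℝ) + 2 := by exact_mod_cast hp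
      nlinarith
    obtain ⟨m, hm, hmle⟩ := ih K3 ((4 / 3 : ℝ) * (t - 2) + 2) (by nlinarith)
      (fun k hk m' hm' h => hprop k (hsub hk) m' (hsub hm') h) hlb3 (by omega)
    refine ⟨m, hsub hm, ?_⟩
    calc (4 / 3 : ℝ) ^ (s + 1) * (t - 2) = (4 / 3 : ℝ) ^ s * ((4 / 3 : ℝ) * (t - 2) + 2 - 2) := by
          ring
      _ ≤ (m : ℝ) - 2 := hmle

end Stmt16Aux

theorem stmt16 (A : Type*) (Q : List A) (hQ : SquareFree Q) (n : ℕ)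
    (hn : Q.length = n) (hn2 : 2 ≤ n) (p : ℕ) (hp : p < n) :
    (Nat.card {ℓ : ℕ | ∃ W W' : List A, AlmostSq W W' ∧
        (W ++ W').length = ℓ ∧ (W ++ W') <+: Q.drop p} : ℝ)
      < 2 * Real.logb (5 / 4) n := by
  classical
  set q := Q.drop p with hqdef
  have hsf : SquareFree q := by
    rintro ⟨X, hX, hinf⟩
    exact hQ ⟨X, hX, hinf.trans (List.drop_suffix p Q).isInfix⟩
  have hqlen : q.length ≤ n := by
    rw [hqdef, List.length_drop, hn]; omega
  set S := {ℓ : ℕ | ∃ W W' : List A, AlmostSq W W' ∧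
      (W ++ W').length = ℓ ∧ (W ++ W') <+: q} with hSdef
  have hmem : ∀ ℓ ∈ S, ∃ k, ℓ = 2 * k + 1 ∧ Stmt16Aux.Cert q k := by
    rintro ℓ ⟨W, W', hA, hlen, hpre⟩
    have hodd : ∃ k, ℓ = 2 * k + 1 := by
      rcases hA with ⟨W₁, W₂, x, h1, h2⟩ | ⟨W₁, W₂, x, h1, h2⟩ <;>
        (refine ⟨W₁.length + W₂.length, ?_⟩; subst h1 h2; rw [← hlen];
          simp only [List.length_append, List.length_cons]; omega)
    obtain ⟨k, rfl⟩ := hodd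
    exact ⟨k, rfl, Stmt16Aux.cert_of_prefix q W W' hA hpre k hlen⟩
  have hsub : S ⊆ Set.Iic n := by
    rintro ℓ ⟨W, W', hA, hlen, hpre⟩
    have := hpre.length_le
    simp only [Set.mem_Iic]
    omega
  have hfin : S.Finite := (Set.finite_Iic n).subset hsub
  have hcardeq : (Nat.card S : ℝ) = (hfin.toFinset.card : ℝ) := by
    rw [Nat.card_coe_set_eq, Set.ncard_eq_toFinset_card S hfin]
  rw [hcardeq]
  set F := hfin.toFinset with hF
  have hmemF : ∀ ℓ ∈ F, ∃ k, ℓ = 2 * k + 1 ∧ Stmt16Aux.Cert q k := by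
    intro ℓ hℓ
    exact hmem ℓ (hfin.mem_toFinset.mp hℓ)
  set Kf := F.image (fun ℓ => ℓ / 2) with hKf
  have hFK : F.card = Kf.card := by
    rw [hKf]
    refine (Finset.card_image_of_injOn ?_).symm
    intro a ha b hb hab
    obtain ⟨ka, hka, _⟩ := hmemF a ha
    obtain ⟨kb, hkb, _⟩ := hmemF b hb
    simp only at hab
    omega
  have hcert : ∀ k ∈ Kf, Stmt16Aux.Cert q k := by
    intro k hk
    rw [hKf] at hk
    obtain ⟨ℓ, hℓ, hdiv⟩ := Finset.mem_image.mp hk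
    obtain ⟨k', hk', hc⟩ := hmemF ℓ hℓ
    have : k = k' := by omega
    rw [this]; exact hc
  have hklen : ∀ k ∈ Kf, 2 * k + 1 ≤ n := fun k hk => le_trans (hcert k hk).1 hqlen
  set Kbig := Kf.filter (fun k => 8 ≤ k) with hKbig
  have hsplit : Kf.card ≤ 8 + Kbig.card := by
    have h1 : Kf.filter (fun k => ¬ 8 ≤ k) ⊆ Finset.range 8 := by
      intro a ha
      simp only [Finset.mem_filter] at ha
      simp only [Finset.mem_range]
      omega
    have h2 := Finset.card_filter_add_card_filter_not (s := Kf)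
      (p := fun k => 8 ≤ k)
    have h3 := Finset.card_le_card h1
    simp only [Finset.card_range] at h3
    rw [hKbig]
    omega
  have hprop : ∀ k ∈ Kbig, ∀ m ∈ Kbig, k + 2 ≤ m → 4 * k ≤ 3 * m + 2 := by
    intro k hk m hm hkm
    exact Stmt16Aux.pair q hsf k m (hcert k (Finset.mem_of_mem_filter k hk))
      (hcert m (Finset.mem_of_mem_filter m hm)) hkm
  -- reduction to a power inequality
  have npos : (0 : ℝ) < (n : ℝ) ^ 2 := by
    have : (2 : ℝ) ≤ (n : ℝ) := by exact_mod_cast hn2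
    nlinarith
  have main : ∀ c : ℕ, F.card ≤ c → ((5 : ℝ)/4) ^ c < (n : ℝ) ^ 2 →
      (F.card : ℝ) < 2 * Real.logb (5 / 4) n := by
    intro c hc hpow
    have h2 : (c : ℝ) < Real.logb (5/4) ((n : ℝ) ^ 2) := by
      rw [Real.lt_logb_iff_rpow_lt (by norm_num) npos, Real.rpow_natCast]
      exact hpow
    rw [Real.logb_pow] at h2
    have hcc : (F.card : ℝ) ≤ (c : ℝ) := by exact_mod_cast hc
    push_cast at h2 ⊢
    linarith
  rcases Nat.lt_or_ge Kbig.card 1 with hb0 | hb1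
  · -- no large k's: card ≤ 8
    have hcard8 : F.card ≤ 8 := by omega
    rcases Nat.lt_or_ge n 3 with hn3 | hn3
    · -- n = 2 : every element of S is 1
      have hn2' : n = 2 := by omega
      have hK0 : ∀ k ∈ Kf, k = 0 := by
        intro k hk
        have := hklen k hk
        omega
      have hKsub : Kf ⊆ {0} := by
        intro k hk; simp [hK0 k hk]
      have hc1 : F.card ≤ 1 := by
        rw [hFK]
        simpa using Finset.card_le_card hKsub
      apply main 1 hc1
      rw [hn2']
      norm_num
    · apply main 8 hcard8
      have h9 : (9 : ℝ) ≤ (n : ℝ) ^ 2 := by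
        have : (3 : ℝ) ≤ (n : ℝ) := by exact_mod_cast hn3
        nlinarith
      nlinarith
  · -- there are large k's
    set s := (Kbig.card - 1) / 2 with hs
    have hs1 : 2 * s + 1 ≤ Kbig.card := by omega
    have hs2 : Kbig.card ≤ 2 * s + 2 := by omega
    have hlb : ∀ k ∈ Kbig, (8 : ℝ) ≤ (k : ℝ) := by
      intro k hk
      rw [hKbig] at hk
      have := (Finset.mem_filter.mp hk).2
      exact_mod_cast this
    obtain ⟨m, hmKbig, hmle⟩ := Stmt16Aux.chain s Kbig 8 (by norm_num) hprop hlb hs1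
    have hmn : 2 * m + 1 ≤ n := hklen m (Finset.mem_of_mem_filter m hmKbig)
    have hcardle : F.card ≤ 2 * s + 10 := by omega
    apply main (2 * s + 10) hcardle
    -- n ≥ 2m+1 and m - 2 ≥ 6*(4/3)^s
    have hmR : 6 * (4/3 : ℝ) ^ s ≤ (m : ℝ) - 2 := by
      calc (6 : ℝ) * (4/3) ^ s = (4/3 : ℝ) ^ s * (8 - 2) := by ring
        _ ≤ (m : ℝ) - 2 := hmle
    have hnR : 12 * (4/3 : ℝ) ^ s ≤ (n : ℝ) := by
      have h1 : (2 * m + 1 : ℝ) ≤ (n : ℝ) := by exact_mod_cast hmn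
      push_cast at h1
      nlinarith
    have hposs : (0 : ℝ) < (4/3 : ℝ) ^ s := by positivity
    have hsq : (12 * (4/3 : ℝ) ^ s) ^ 2 ≤ (n : ℝ) ^ 2 := by
      have h12 : (0 : ℝ) ≤ 12 * (4/3 : ℝ) ^ s := by positivity
      nlinarith
    have hcompare : ((5 : ℝ)/4) ^ (2 * s + 10) < (12 * (4/3 : ℝ) ^ s) ^ 2 := by
      have e1 : ((5 : ℝ)/4) ^ (2 * s + 10) = (((5:ℝ)/4) ^ s) ^ 2 * ((5:ℝ)/4) ^ 10 := by
        rw [pow_add, pow_mul, ← pow_mul, mul_comm 2 s, pow_mul]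
      have e2 : (12 * (4/3 : ℝ) ^ s) ^ 2 = 144 * ((4/3 : ℝ) ^ s) ^ 2 := by ring
      have hab : ((5:ℝ)/4) ^ s ≤ ((4:ℝ)/3) ^ s := by
        apply pow_le_pow_left₀ (by norm_num) (by norm_num)
      have ha : (0:ℝ) < ((5:ℝ)/4) ^ s := by positivity
      have h10 : ((5:ℝ)/4) ^ 10 < 144 := by norm_num
      rw [e1, e2]
      nlinarith
    linarith
end

section
/- Theorem 1.5 (lower bound for extremal square-free words): For any integer k ≥ 3, every extremal square-free word over a k-letter alphabet has length n satisfying n > (5/4)^{k/4}. -/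
/- ### Auxiliary lemmas -/

/-- Square-freeness is preserved by reversal. -/
lemma squareFree_reverse {A : Type*} {W : List A} (h : SquareFree W) :
    SquareFree W.reverse := by
  intro ⟨X, hX, hinf⟩
  apply h
  refine ⟨X.reverse, by simpa using hX, ?_⟩
  have : (X ++ X).reverse <:+: W.reverse.reverse := List.reverse_infix.mpr hinf
  simpa [List.reverse_append] using this

/-- For each letter `x`, an extremal square-free word has a suffix of the
form `u ++ x :: u`. -/
lemma suffix_of_extremalSF {A : Type*} {W : List A} (hW : ExtremalSF W) (x : A) :
    ∃ u : List A, (u ++ x :: u) <:+ W := by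
  have hext : Extends W (W ++ [x]) := ⟨W, [], x, by simp, by simp⟩
  obtain ⟨X, hX, hinf⟩ := hW.2 _ hext
  obtain ⟨s, t, hst⟩ := hinf
  rcases t.eq_nil_or_concat with rfl | ⟨t', x', rfl⟩
  · -- the square is a suffix of W ++ [x]
    simp only [List.append_nil] at hst
    obtain ⟨Y, c, rfl⟩ := X.eq_nil_or_concat.resolve_left hX
    have h2 : (s ++ (Y ++ [c]) ++ Y) ++ [c] = W ++ [x] := by
      simpa [List.append_assoc] using hst
    obtain ⟨h3, h4⟩ := List.append_inj' h2 (by simp)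
    have hc : c = x := by simpa using h4
    subst hc
    refine ⟨Y, s, ?_⟩
    rw [← h3]
    simp [List.append_assoc]
  · -- the square is inside W : contradiction with square-freeness
    exfalso
    apply hW.1
    refine ⟨X, hX, s, t', ?_⟩
    have h2 : (s ++ (X ++ X) ++ t') ++ [x'] = W ++ [x] := by
      simpa [List.append_assoc] using hst
    obtain ⟨h3, _⟩ := List.append_inj' h2 (by simp)
    simpa [List.append_assoc] using h3

/-- Two suffixes of the same list with equal lengths coincide. -/
lemma suffix_eq_of_length {A : Type*} {s₁ s₂ W : List A} (h1 : s₁ <:+ W)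
    (h2 : s₂ <:+ W) (hl : s₁.length = s₂.length) : s₁ = s₂ := by
  obtain ⟨t₁, rfl⟩ := h1
  obtain ⟨t₂, h⟩ := h2
  exact ((List.append_inj' h hl.symm).2).symm

/-- Key lemma: if a square-free word has prefixes `u ++ x :: u` and
`v ++ y :: v` with `u` shorter than `v`, then `5(|u|+1) ≤ 4(|v|+1)`. -/
lemma key_step {A : Type*} {R : List A} (hsf : SquareFree R) {u v : List A} {x y : A}
    (hu : (u ++ x :: u) <+: R) (hv : (v ++ y :: v) <+: R)
    (hlt : u.length < v.length) : 5 * (u.length + 1) ≤ 4 * (v.length + 1) := by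
  by_contra hcon
  push_neg at hcon
  set p := u.length + 1 with hp
  set q := v.length + 1 with hq
  set d := q - p with hd
  have hpq : p < q := by omega
  have hd1 : 1 ≤ d := by omega
  have hdp : 4 * d < p := by omega
  have hRlen : 2 * q - 1 ≤ R.length := by
    have := hv.length_le
    simp at this
    omega
  -- pointwise periodicity facts
  have h1 : ∀ i, i < p - 1 → ∀ (hi : i < R.length) (hi' : i + p < R.length),
      R[i] = R[i + p] := by
    intro i hipred hi hi'
    have hiu : i < u.length := by omega
    have e1 : R[i] = (u ++ x :: u)[i]'(by simp; omega) :=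
      (hu.getElem (by simp; omega)).symm
    have e2 : R[i + p] = (u ++ x :: u)[i + p]'(by simp; omega) :=
      (hu.getElem (by simp; omega)).symm
    rw [e1, e2]
    rw [List.getElem_append_left (by omega), List.getElem_append_right (by omega)]
    simp only [show i + p - u.length = i + 1 from by omega, List.getElem_cons_succ]
  have h2 : ∀ i, i < q - 1 → ∀ (hi : i < R.length) (hi' : i + q < R.length),
      R[i] = R[i + q] := by
    intro i hipred hi hi'
    have hiu : i < v.length := by omega
    have e1 : R[i] = (v ++ y :: v)[i]'(by simp; omega) :=
      (hv.getElem (by simp; omega)).symm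
    have e2 : R[i + q] = (v ++ y :: v)[i + q]'(by simp; omega) :=
      (hv.getElem (by simp; omega)).symm
    rw [e1, e2]
    rw [List.getElem_append_left (by omega), List.getElem_append_right (by omega)]
    simp only [show i + q - v.length = i + 1 from by omega, List.getElem_cons_succ]
  -- period d on positions [p, 2p-2]
  have h3 : ∀ j, p ≤ j → j < 2 * p - 1 → ∀ (hj : j < R.length) (hj' : j + d < R.length),
      R[j] = R[j + d] := by
    intro j hj1 hj2 hj hj'
    have hi : j - p < p - 1 := by omega
    have hiR : j - p < R.length := by omega
    have hjq : j - p + q < R.length := by omega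
    have e1 : R[j - p] = R[j]'hj := by
      have := h1 (j - p) hi hiR (by omega)
      rw [this]; congr 1; omega
    have e2 : R[j - p] = R[j + d] := by
      have := h2 (j - p) (by omega) hiR hjq
      rw [this]; congr 1; omega
    rw [← e1, e2]
  -- build the square
  apply hsf
  set X : List A := (R.drop p).take d with hX
  have hlenR : p + 2 * d ≤ R.length := by omega
  have hXlen : X.length = d := by
    simp [hX]
    omega
  refine ⟨X, ?_, ?_⟩
  · intro hnil
    rw [hnil] at hXlen
    simp at hXlen
    omega
  · have heq : X ++ X = (R.drop p).take (d + d) := by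
      rw [List.take_add]
      congr 1
      rw [List.drop_drop]
      apply List.ext_getElem
      · simp [hXlen]; omega
      · intro i hi1 hi2
        simp only [hXlen] at hi1
        have e1 : X[i]'(by omega) = R[p + i]'(by omega) := by
          simp [hX]
        have e2 : ((R.drop (p + d)).take d)[i]'hi2 = R[p + d + i]'(by omega) := by
          simp
        rw [e1, e2]
        have := h3 (p + i) (by omega) (by omega) (by omega) (by omega)
        rw [this]; congr 1; omega
    rw [heq]
    exact ((R.drop p).take_prefix (d + d)).isInfix.trans (R.drop_suffix p).isInfix

/-- Chain lemma over a finite set of naturals. -/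
lemma chain_lemma : ∀ (m : ℕ) (S : Finset ℕ), S.card = m + 1 →
    (∀ a ∈ S, ∀ b ∈ S, a < b → 5 * a ≤ 4 * b) →
    ∀ (hS : S.Nonempty), ∃ b ∈ S, 5 ^ m * S.min' hS ≤ 4 ^ m * b := by
  intro m
  induction m with
  | zero =>
    intro S hcard _ hS
    exact ⟨S.min' hS, S.min'_mem hS, by simp⟩
  | succ m ih =>
    intro S hcard hrel hS
    set a := S.min' hS with ha
    set S' := S.erase a with hS'
    have hcard' : S'.card = m + 1 := by
      rw [hS', Finset.card_erase_of_mem (S.min'_mem hS), hcard]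
      omega
    have hS'ne : S'.Nonempty := Finset.card_pos.mp (by omega)
    obtain ⟨b, hbS', hb⟩ := ih S' hcard'
      (fun a' ha' b' hb' h => hrel a' (Finset.mem_of_mem_erase ha') b'
        (Finset.mem_of_mem_erase hb') h) hS'ne
    refine ⟨b, Finset.mem_of_mem_erase hbS', ?_⟩
    have hmin' : a < S'.min' hS'ne := by
      have h1 : S'.min' hS'ne ∈ S := Finset.mem_of_mem_erase (S'.min'_mem hS'ne)
      have h2 : S'.min' hS'ne ≠ a := Finset.ne_of_mem_erase (S'.min'_mem hS'ne)
      have h3 : a ≤ S'.min' hS'ne := S.min'_le _ h1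
      omega
    have hrel' : 5 * a ≤ 4 * S'.min' hS'ne :=
      hrel a (S.min'_mem hS) _ (Finset.mem_of_mem_erase (S'.min'_mem hS'ne)) hmin'
    calc 5 ^ (m + 1) * a = 5 ^ m * (5 * a) := by ring
      _ ≤ 5 ^ m * (4 * S'.min' hS'ne) := by
          exact Nat.mul_le_mul_left _ hrel'
      _ = 4 * (5 ^ m * S'.min' hS'ne) := by ring
      _ ≤ 4 * (4 ^ m * b) := Nat.mul_le_mul_left _ hb
      _ = 4 ^ (m + 1) * b := by ring

theorem stmt18 (k : ℕ) (hk : 3 ≤ k) (W : List (Fin k)) (hW : ExtremalSF W) :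
    ((W.length : ℝ)) > (5 / 4 : ℝ) ^ ((k : ℝ) / 4) := by
  -- choose for each letter x a suffix u_x ++ x :: u_x
  have hchoice : ∀ x : Fin k, ∃ u : List (Fin k), (u ++ x :: u) <:+ W :=
    fun x => suffix_of_extremalSF hW x
  choose u hu using hchoice
  set f : Fin k → ℕ := fun x => (u x).length + 1 with hf
  -- f is injective
  have hinj : Function.Injective f := by
    intro x y hxy
    have hlen : (u x ++ x :: u x).length = (u y ++ y :: u y).length := by
      simp [hf] at hxy ⊢; omega
    have := suffix_eq_of_length (hu x) (hu y) hlen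
    have hlu : (u x).length = (u y).length := by simp [hf] at hxy; omega
    obtain ⟨_, h2⟩ := List.append_inj this hlu
    exact (List.cons.injEq _ _ _ _ ▸ h2).1
  -- the 5/4 growth relation on values of f
  have hR : SquareFree W.reverse := squareFree_reverse hW.1
  have hpref : ∀ x : Fin k, ((u x).reverse ++ x :: (u x).reverse) <+: W.reverse := by
    intro x
    have := (hu x)
    rw [← List.reverse_prefix] at this
    simpa [List.reverse_append] using this
  have hrel : ∀ a ∈ Finset.univ.image f, ∀ b ∈ Finset.univ.image f,
      a < b → 5 * a ≤ 4 * b := by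
    intro a ha b hb hab
    obtain ⟨x, _, rfl⟩ := Finset.mem_image.mp ha
    obtain ⟨y, _, rfl⟩ := Finset.mem_image.mp hb
    have hlt : (u x).reverse.length < (u y).reverse.length := by
      simp [hf] at hab ⊢; omega
    have := key_step hR (hpref x) (hpref y) hlt
    simpa [hf] using this
  -- apply the chain lemma
  set S := Finset.univ.image f with hSdef
  have hcard : S.card = k := by
    rw [hSdef, Finset.card_image_of_injective _ hinj, Finset.card_univ, Fintype.card_fin]
  have hSne : S.Nonempty := by
    refine Finset.card_pos.mp ?_
    omega
  have hck : S.card = (k - 1) + 1 := by omega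
  obtain ⟨b, hbS, hb⟩ := chain_lemma (k - 1) S hck hrel hSne
  -- min' ≥ 1
  have hmin1 : 1 ≤ S.min' hSne := by
    have := S.min'_mem hSne
    obtain ⟨x, _, hx⟩ := Finset.mem_image.mp this
    have hx' : (u x).length + 1 = S.min' hSne := by simpa [hf] using hx
    omega
  have hb' : 5 ^ (k - 1) ≤ 4 ^ (k - 1) * b := by
    calc 5 ^ (k - 1) = 5 ^ (k - 1) * 1 := by ring
      _ ≤ 5 ^ (k - 1) * S.min' hSne := Nat.mul_le_mul_left _ hmin1
      _ ≤ 4 ^ (k - 1) * b := hb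
  -- b = f x for some x, and W.length ≥ 2 * b - 1
  obtain ⟨x, _, hx⟩ := Finset.mem_image.mp hbS
  have hWlen : 2 * b - 1 ≤ W.length := by
    have hle := (hu x).length_le
    have hx' : (u x).length + 1 = b := by simpa [hf] using hx
    simp only [List.length_append, List.length_cons] at hle
    omega
  have hb1 : 1 ≤ b := by
    rcases Nat.eq_zero_or_pos b with rfl | h
    · rw [Nat.mul_zero] at hb'
      exact absurd (Nat.le_zero.mp hb') (pow_ne_zero _ (by norm_num))
    · exact h
  -- now real arithmetic
  have hbR : ((5 : ℝ) / 4) ^ (k - 1) ≤ (b : ℝ) := by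
    rw [div_pow, div_le_iff₀ (by positivity)]
    have := hb'
    calc ((5:ℝ)) ^ (k-1) = ((5 ^ (k-1) : ℕ) : ℝ) := by push_cast; ring
      _ ≤ ((4 ^ (k-1) * b : ℕ) : ℝ) := by exact_mod_cast Nat.cast_le.mpr hb'
      _ = (b : ℝ) * (4 : ℝ) ^ (k - 1) := by push_cast; ring
  have h54 : (1 : ℝ) < 5 / 4 := by norm_num
  have hpow1 : (1 : ℝ) < ((5 : ℝ) / 4) ^ (k - 1) := by
    apply one_lt_pow₀ h54
    omega
  have hlen2 : ((W.length : ℝ)) ≥ 2 * (b : ℝ) - 1 := by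
    have : (2 * b - 1 : ℕ) = 2 * b - 1 := rfl
    have h2 : ((2 * b - 1 : ℕ) : ℝ) = 2 * (b : ℝ) - 1 := by
      push_cast [Nat.cast_sub (by omega : 1 ≤ 2 * b)]; ring
    calc ((W.length : ℝ)) ≥ ((2 * b - 1 : ℕ) : ℝ) := by exact_mod_cast hWlen
      _ = 2 * (b : ℝ) - 1 := h2
  have hstrict : ((W.length : ℝ)) > ((5 : ℝ) / 4) ^ (k - 1) := by
    have : 2 * (b : ℝ) - 1 > (b : ℝ) := by
      have : (1 : ℝ) ≤ b := by exact_mod_cast hb1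
      nlinarith [hpow1, hbR]
    nlinarith [hbR, hpow1]
  -- compare exponents: (5/4)^(k/4 : ℝ) ≤ (5/4)^(k-1 : ℕ)
  have hexp : ((5 : ℝ) / 4) ^ ((k : ℝ) / 4) ≤ ((5 : ℝ) / 4) ^ ((k : ℝ) - 1) := by
    apply Real.rpow_le_rpow_of_exponent_le (le_of_lt h54)
    have : (3 : ℝ) ≤ (k : ℝ) := by exact_mod_cast hk
    linarith
  have hcast : ((5 : ℝ) / 4) ^ ((k : ℝ) - 1) = ((5 : ℝ) / 4) ^ (k - 1) := by
    rw [← Real.rpow_natCast ((5:ℝ)/4) (k - 1)]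
    congr 1
    have : (1 : ℝ) ≤ (k : ℝ) := by exact_mod_cast (by omega : 1 ≤ k)
    push_cast [Nat.cast_sub (by omega : 1 ≤ k)]
    ring
  calc ((5 : ℝ) / 4) ^ ((k : ℝ) / 4) ≤ ((5 : ℝ) / 4) ^ ((k : ℝ) - 1) := hexp
    _ = ((5 : ℝ) / 4) ^ (k - 1) := hcast
    _ < ((W.length : ℝ)) := hstrict
end

section
/- If W is an extremal square-free word of length n over a k-letter alphabet, then W contains at least k(n+1)/2 distinct almost-square factor occurrences: each of the k(n+1) extensions of W contains a square, and each such square arises from an almost-square factor of W by a single insertion, with each almost-square accounting for at most two extensions. -/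
/-!
A square in an extension `W₁ ++ x :: W₂` of the square-free word `W = W₁ ++ W₂` must contain the
inserted letter, so it is `ZZ` with `Z = S₁ ++ x :: S₂` and, according to which copy of `Z`
received `x`, `W` contains the almost-square `(S₁ ++ S₂) Z` or `Z (S₁ ++ S₂)`. The position and
length of this occurrence, together with the side, determine the extension: once the factors
`S₁ ++ S₂` and `Z` of `W` are fixed, `Z` being square-free pins down the insertion, because two
different insertions producing the same word create a factor `yy`. Hence the `k(n+1)` extensions
inject into (occurrences) × `Bool`.
-/

namespace List

variable {α : Type*}

theorem append_eq_insert {A B W₁ W₂ : List α} {x : α} (h : A ++ B = W₁ ++ x :: W₂) :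
    (∃ A₂, A = W₁ ++ x :: A₂ ∧ W₂ = A₂ ++ B) ∨ ∃ B₁, W₁ = A ++ B₁ ∧ B = B₁ ++ x :: W₂ := by
  obtain ⟨B₁, hW₁, hB⟩ | ⟨C, hA, hC⟩ := append_eq_append_iff.mp h
  · exact .inr ⟨B₁, hW₁, hB⟩
  · obtain ⟨rfl, rfl⟩ | ⟨A₂, rfl, hW₂⟩ := cons_eq_append_iff.mp hC
    · exact .inr ⟨[], by simpa using hA.symm, rfl⟩
    · exact .inl ⟨A₂, hA, hW₂⟩

end List

section

variable {α : Type*}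

theorem SquareFree.of_infix {U V : List α} (hV : SquareFree V) (hUV : U <:+: V) :
    SquareFree U :=
  fun ⟨X, hX, hXU⟩ => hV ⟨X, hX, hXU.trans hUV⟩

theorem hasSquare_of_insert_eq_insert {L₁ R₁ L₂ R₂ C : List α} {y z : α}
    (hC : C ≠ []) (hL : L₂ = L₁ ++ C) (hR : L₁ ++ R₁ = L₂ ++ R₂)
    (h : y :: R₁ = C ++ z :: R₂) : HasSquare (L₁ ++ y :: R₁) := by
  obtain ⟨c, C, rfl⟩ := List.exists_cons_of_ne_nil hC
  obtain ⟨rfl, -⟩ := List.cons_eq_cons.mp h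
  have hR₁ : R₁ = y :: (C ++ R₂) := by simpa [hL] using hR
  exact ⟨[y], by simp, L₁, C ++ R₂, by simp [hR₁]⟩

theorem SquareFree.eq_of_insert_eq {L₁ R₁ L₂ R₂ : List α} {y z : α}
    (hsf : SquareFree (L₁ ++ y :: R₁)) (hR : L₁ ++ R₁ = L₂ ++ R₂)
    (h : L₁ ++ y :: R₁ = L₂ ++ z :: R₂) : L₁ = L₂ ∧ y = z ∧ R₁ = R₂ := by
  obtain ⟨C, hL, hC⟩ | ⟨C, hL, hC⟩ := List.append_eq_append_iff.mp h
  · rcases eq_or_ne C [] with rfl | hne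
    · simp_all
    · exact (hsf (hasSquare_of_insert_eq_insert hne hL hR hC)).elim
  · rcases eq_or_ne C [] with rfl | hne
    · simp_all
    · rw [h] at hsf
      exact (hsf (hasSquare_of_insert_eq_insert hne hL hR.symm hC)).elim

/-- The square `ZZ`, `Z = S₁ ++ x :: S₂`, of `W₁ ++ x :: W₂` gets the new letter in its first
copy (`true`) or in its second copy (`false`); `P` and `Q` are what lies before and after it. -/
def CompletesSquare (W₁ W₂ : List α) (x : α) (P S₁ S₂ Q : List α) : Bool → Prop
  | true => W₁ = P ++ S₁ ∧ W₂ = S₂ ++ (S₁ ++ x :: S₂) ++ Q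
  | false => W₁ = P ++ (S₁ ++ x :: S₂) ++ S₁ ∧ W₂ = S₂ ++ Q

theorem exists_completesSquare {W₁ W₂ : List α} {x : α} (hsf : SquareFree (W₁ ++ W₂))
    (hsq : HasSquare (W₁ ++ x :: W₂)) :
    ∃ P S₁ S₂ Q b, CompletesSquare W₁ W₂ x P S₁ S₂ Q b := by
  obtain ⟨Z, hZ, P, Q, h⟩ := hsq
  have hZZ : ∀ L R, L ++ (Z ++ Z) ++ R ≠ W₁ ++ W₂ := fun L R hLR => hsf ⟨Z, hZ, L, R, hLR⟩
  rw [List.append_assoc, List.append_assoc] at h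
  obtain ⟨A, -, rfl⟩ | ⟨S₁, rfl, h₁⟩ := List.append_eq_insert h
  · exact (hZZ (W₁ ++ A) Q (by simp)).elim
  obtain ⟨S₂, hZ₁, rfl⟩ | ⟨C, rfl, h₂⟩ := List.append_eq_insert h₁
  · exact ⟨P, S₁, S₂, Q, true, rfl, by simp [hZ₁]⟩
  obtain ⟨S₂, hZ₂, rfl⟩ | ⟨D, rfl, -⟩ := List.append_eq_insert h₂
  · exact ⟨P, C, S₂, Q, false, by simp [hZ₂], rfl⟩
  · exact (hZZ P (D ++ W₂) (by simp)).elim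

def almostSqOccurrences (W : List α) : Set (ℕ × ℕ) :=
  {pl | pl.1 < W.length ∧ ∃ U U' : List α, AlmostSq U U' ∧
    (U ++ U').length = pl.2 ∧ (U ++ U') <+: W.drop pl.1}

theorem almostSqOccurrences_finite (W : List α) : (almostSqOccurrences W).Finite := by
  refine ((Set.finite_Iio W.length).prod (Set.finite_Iic W.length)).subset ?_
  rintro ⟨p, l⟩ ⟨hp, U, U', -, rfl, hpre⟩
  have := hpre.length_le
  simp only [List.length_drop] at this
  exact ⟨hp, by simp only [Set.mem_Iic]; omega⟩

theorem mk_mem_almostSqOccurrences {P U U' Q : List α} (h : AlmostSq U U') :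
    (P.length, (U ++ U').length) ∈ almostSqOccurrences (P ++ (U ++ U') ++ Q) := by
  have hpos : 0 < U.length + U'.length := by
    obtain ⟨V₁, V₂, y, rfl, rfl⟩ | ⟨V₁, V₂, y, rfl, rfl⟩ := h <;> simp
  refine ⟨by simp only [List.length_append]; omega, U, U', h, rfl, ?_⟩
  rw [List.append_assoc, List.drop_left]
  exact List.prefix_append _ _

theorem CompletesSquare.mem_almostSqOccurrences {W₁ W₂ P S₁ S₂ Q : List α} {x : α} {b : Bool}
    (h : CompletesSquare W₁ W₂ x P S₁ S₂ Q b) :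
    (P.length, 2 * (S₁ ++ S₂).length + 1) ∈ almostSqOccurrences (W₁ ++ W₂) := by
  have hext : Extends (S₁ ++ S₂) (S₁ ++ x :: S₂) := ⟨S₁, S₂, x, rfl, rfl⟩
  cases b with
  | true =>
    obtain ⟨rfl, rfl⟩ := h
    convert mk_mem_almostSqOccurrences (P := P) (Q := Q) (Or.inl hext) using 2
    · simp
    · simp only [List.length_append, List.length_cons]; omega
  | false =>
    obtain ⟨rfl, rfl⟩ := h
    convert mk_mem_almostSqOccurrences (P := P) (Q := Q) (Or.inr hext) using 2
    · simp
    · simp only [List.length_append, List.length_cons]; omega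

theorem CompletesSquare.eq_of_length_eq {W₁ W₂ P S₁ S₂ Q W₁' W₂' P' S₁' S₂' Q' : List α}
    {x x' : α} {b : Bool} (hsf : SquareFree (W₁ ++ W₂)) (hW : W₁ ++ W₂ = W₁' ++ W₂')
    (h : CompletesSquare W₁ W₂ x P S₁ S₂ Q b) (h' : CompletesSquare W₁' W₂' x' P' S₁' S₂' Q' b)
    (hP : P.length = P'.length) (hS : (S₁ ++ S₂).length = (S₁' ++ S₂').length) :
    W₁ = W₁' ∧ x = x' := by
  have hX : (S₁ ++ x :: S₂).length = (S₁' ++ x' :: S₂').length := by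
    simp only [List.length_append, List.length_cons] at hS ⊢; omega
  cases b with
  | true =>
    obtain ⟨rfl, rfl⟩ := h
    obtain ⟨rfl, rfl⟩ := h'
    have h₀ : P ++ ((S₁ ++ S₂) ++ ((S₁ ++ x :: S₂) ++ Q)) =
        P' ++ ((S₁' ++ S₂') ++ ((S₁' ++ x' :: S₂') ++ Q')) := by simpa using hW
    obtain ⟨rfl, h₁⟩ := List.append_inj h₀ hP
    obtain ⟨hS', h₂⟩ := List.append_inj h₁ hS
    obtain ⟨hX', -⟩ := List.append_inj h₂ hX
    have hsfX : SquareFree (S₁ ++ x :: S₂) := hsf.of_infix ⟨P ++ S₁ ++ S₂, Q, by simp⟩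
    obtain ⟨rfl, rfl, rfl⟩ := hsfX.eq_of_insert_eq hS' hX'
    exact ⟨rfl, rfl⟩
  | false =>
    obtain ⟨rfl, rfl⟩ := h
    obtain ⟨rfl, rfl⟩ := h'
    have h₀ : P ++ ((S₁ ++ x :: S₂) ++ ((S₁ ++ S₂) ++ Q)) =
        P' ++ ((S₁' ++ x' :: S₂') ++ ((S₁' ++ S₂') ++ Q')) := by simpa using hW
    obtain ⟨rfl, h₁⟩ := List.append_inj h₀ hP
    obtain ⟨hX', h₂⟩ := List.append_inj h₁ hX
    obtain ⟨hS', -⟩ := List.append_inj h₂ hS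
    have hsfX : SquareFree (S₁ ++ x :: S₂) := hsf.of_infix ⟨P, S₁ ++ (S₂ ++ Q), by simp⟩
    obtain ⟨rfl, rfl, rfl⟩ := hsfX.eq_of_insert_eq hS' hX'
    exact ⟨rfl, rfl⟩

end

theorem Fintype.card_le_two_mul_ncard {ι β : Type*} [Fintype ι] {s : Set β} (hs : s.Finite)
    (f : ι → β × Bool) (hf : Function.Injective f) (hfs : ∀ i, (f i).1 ∈ s) :
    Fintype.card ι ≤ 2 * s.ncard := by
  have hmaps : ∀ i ∈ Finset.univ, f i ∈ hs.toFinset ×ˢ Finset.univ := fun i _ =>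
    Finset.mem_product.2 ⟨hs.mem_toFinset.2 (hfs i), Finset.mem_univ _⟩
  have := Finset.card_le_card_of_injOn f hmaps hf.injOn
  rwa [Finset.card_product, Finset.card_univ, Finset.card_univ, Fintype.card_bool,
    ← Set.ncard_eq_toFinset_card _ hs, mul_comm] at this

theorem stmt19 (k : ℕ) (n : ℕ) (W : List (Fin k)) (hW : ExtremalSF W)
    (hn : W.length = n) :
    {pl : ℕ × ℕ | pl.1 < n ∧ ∃ U U' : List (Fin k), AlmostSq U U' ∧
        (U ++ U').length = pl.2 ∧ (U ++ U') <+: W.drop pl.1}.Finite ∧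
    2 * {pl : ℕ × ℕ | pl.1 < n ∧ ∃ U U' : List (Fin k), AlmostSq U U' ∧
        (U ++ U').length = pl.2 ∧ (U ++ U') <+: W.drop pl.1}.ncard ≥ k * (n + 1) := by
  subst hn
  obtain ⟨hsf, hext⟩ := hW
  have hsplit (i : ℕ) : W.take i ++ W.drop i = W := List.take_append_drop i W
  have hcompl (e : Fin (W.length + 1) × Fin k) :
      ∃ P S₁ S₂ Q b, CompletesSquare (W.take e.1) (W.drop e.1) e.2 P S₁ S₂ Q b :=
    exists_completesSquare (by rwa [hsplit]) (hext _ ⟨_, _, e.2, (hsplit e.1).symm, rfl⟩)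
  choose P S₁ S₂ Q b hb using hcompl
  let f (e : Fin (W.length + 1) × Fin k) : (ℕ × ℕ) × Bool :=
    (((P e).length, 2 * (S₁ e ++ S₂ e).length + 1), b e)
  have hinj : Function.Injective f := by
    rintro ⟨i, x⟩ ⟨i', x'⟩ he
    obtain ⟨hPS, hbb⟩ := Prod.mk.inj he
    obtain ⟨hP, hS⟩ := Prod.mk.inj hPS
    obtain ⟨hi, rfl⟩ := (hb (i, x)).eq_of_length_eq (by rwa [hsplit])
      (by rw [hsplit, hsplit]) (hbb ▸ hb (i', x')) hP (by omega)
    rw [List.take_eq_take_iff] at hi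
    refine Prod.ext (Fin.ext ?_) rfl
    omega
  have hcard := Fintype.card_le_two_mul_ncard (almostSqOccurrences_finite W) f hinj
    fun e => hsplit e.1 ▸ (hb e).mem_almostSqOccurrences
  rw [Fintype.card_prod, Fintype.card_fin, Fintype.card_fin, mul_comm] at hcard
  exact ⟨almostSqOccurrences_finite W, hcard⟩
end
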